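/- arXiv:2205.13726 — 5 statements merged into one kernel-verified Lean document; each statement's English description precedes it below -/
import Mathlib

section
/- Let n ∈ ℕ, let f : ℝⁿ → ℝⁿ be locally Lipschitz continuous, let h : ℝⁿ → ℝ be continuously differentiable, let a, b > 0, and let α : ℝ → ℝ be continuous with α(0) = 0. Suppose that for every x ∈ ℝⁿ with h(x) ∈ [-b, a] one has ⟪∇h(x), f(x)⟫ ≥ -α(h(x)), and that ∇h(x) ≠ 0 whenever h(x) = 0. Then for every T ∈ (0, ∞] and every differentiable curve x : [0, T) → ℝⁿ with x'(t) = f(x(t)) for all t ∈ [0, T) and h(x(0)) ≥ 0, one has h(x(t)) ≥ 0 for all t ∈ [0, T). (Safety / forward invariance of the constraint set C = {x : h(x) ≥ 0}, Theorem 1(i) specialized to the closed-loop vector field.) -/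
open scoped RealInnerProductSpace ENNReal

open Metric Set Filter

/-- Climbing lemma: near a point `p` where the gradient of `h` is (almost) nonzero,
any point with slightly negative `h`-value is at distance at most `(2/‖∇h p‖) * (-h z)`
from the set `{h ≥ 0}`. -/
lemma typeII_climb {n : ℕ} {h : EuclideanSpace ℝ (Fin n) → ℝ} (hh : ContDiff ℝ 1 h)
    {p : EuclideanSpace ℝ (Fin n)} {ε : ℝ} (hε : 0 < ε)
    (hg : gradient h p ≠ 0)
    (hnear : ∀ w ∈ Metric.ball p ε, ‖gradient h w - gradient h p‖ ≤ ‖gradient h p‖ / 4)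
    {z : EuclideanSpace ℝ (Fin n)} (hzball : z ∈ Metric.ball p (ε / 2))
    (hz : h z < 0) (hsmall : 2 / ‖gradient h p‖ * (-h z) ≤ ε / 2) :
    ∃ z', 0 ≤ h z' ∧ dist z z' ≤ 2 / ‖gradient h p‖ * (-h z) := by
  set g : EuclideanSpace ℝ (Fin n) := gradient h p with hgdef
  have hg0 : 0 < ‖g‖ := norm_pos_iff.2 hg
  set g0 : ℝ := ‖g‖ with hg0def
  set u : EuclideanSpace ℝ (Fin n) := g0⁻¹ • g with hudef
  have hu : ‖u‖ = 1 := by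
    rw [hudef, norm_smul, norm_inv, norm_norm]
    field_simp
  set r0 : ℝ := 2 / g0 * (-h z) with hr0def
  have hr0pos : 0 < r0 := by
    apply mul_pos (by positivity) (by linarith)
  -- the derivative of h along direction u is at least g0/2 on the ball
  have hinner : ∀ w ∈ Metric.ball p ε, g0 / 2 ≤ ⟪gradient h w, u⟫ := by
    intro w hw
    have h1 : ⟪g, u⟫ = g0 := by
      rw [hudef, real_inner_smul_right, real_inner_self_eq_norm_mul_norm]
      field_simp [hg0def]
      rw [hg0def]
    have h2 : |⟪gradient h w - g, u⟫| ≤ g0 / 4 := by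
      calc |⟪gradient h w - g, u⟫| ≤ ‖gradient h w - g‖ * ‖u‖ := abs_real_inner_le_norm _ _
        _ = ‖gradient h w - g‖ := by rw [hu, mul_one]
        _ ≤ g0 / 4 := hnear w hw
    have h3 : ⟪gradient h w, u⟫ = ⟪g, u⟫ + ⟪gradient h w - g, u⟫ := by
      rw [← inner_add_left]
      congr 1
      abel
    have := abs_le.1 h2
    rw [h3, h1]
    linarith [this.1]
  -- φ r = h (z + r • u) has derivative ⟪∇h (z + r•u), u⟫
  set φ : ℝ → ℝ := fun r => h (z + r • u) with hφdef
  have hφd : ∀ r : ℝ, HasDerivAt φ ⟪gradient h (z + r • u), u⟫ r := by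
    intro r
    have hcurve : HasDerivAt (fun r : ℝ => z + r • u) u r := by
      simpa using ((hasDerivAt_id r).smul_const u).const_add z
    have hdiff := (hh.differentiable one_ne_zero (z + r • u)).hasFDerivAt
    have hcomp := hdiff.comp_hasDerivAt r hcurve
    have : ⟪gradient h (z + r • u), u⟫ = fderiv ℝ h (z + r • u) u := by
      simp only [gradient]
      exact InnerProductSpace.toDual_symm_apply
    rw [this]
    exact hcomp
  have hφcont : Continuous φ := by
    apply hh.continuous.comp
    continuity
  -- members of the segment stay in the ball
  have hseg : ∀ r ∈ Icc (0 : ℝ) r0, z + r • u ∈ Metric.ball p ε := by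
    intro r hr
    have hdist : dist (z + r • u) z ≤ r0 := by
      rw [dist_eq_norm]
      simp only [add_sub_cancel_left, norm_smul, hu, mul_one]
      rw [Real.norm_eq_abs, abs_of_nonneg hr.1]
      exact hr.2
    have hzp : dist z p < ε / 2 := hzball
    calc dist (z + r • u) p ≤ dist (z + r • u) z + dist z p := dist_triangle _ _ _
      _ < r0 + ε / 2 := by linarith
      _ ≤ ε / 2 + ε / 2 := by
          have : r0 ≤ ε / 2 := hsmall
          linarith
      _ = ε := by ring
  -- θ is monotone on [0, r0]
  set θ : ℝ → ℝ := fun r => φ r - r * (g0 / 2) with hθdef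
  have hθd : ∀ r : ℝ, HasDerivAt θ (⟪gradient h (z + r • u), u⟫ - g0 / 2) r := by
    intro r
    have := (hφd r).sub (((hasDerivAt_id r).mul_const (g0 / 2)))
    exact this.congr_deriv (by simp)
  have hθmono : MonotoneOn θ (Icc 0 r0) := by
    apply monotoneOn_of_deriv_nonneg (convex_Icc 0 r0)
    · exact (hφcont.sub (continuous_id.mul continuous_const)).continuousOn
    · intro r hr
      exact ((hθd r).differentiableAt).differentiableWithinAt
    · intro r hr
      rw [interior_Icc] at hr
      have hmem : z + r • u ∈ Metric.ball p ε := hseg r ⟨hr.1.le, hr.2.le⟩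
      rw [(hθd r).deriv]
      have := hinner _ hmem
      linarith
  have hkey : 0 ≤ φ r0 := by
    have h0 : θ 0 ≤ θ r0 :=
      hθmono ⟨le_refl 0, hr0pos.le⟩ ⟨hr0pos.le, le_refl r0⟩ hr0pos.le
    have hφ0 : φ 0 = h z := by simp [hφdef]
    have : φ 0 - 0 ≤ φ r0 - r0 * (g0 / 2) := by simpa [hθdef] using h0
    have hval : r0 * (g0 / 2) = -h z := by
      rw [hr0def]
      field_simp
    rw [hφ0] at this
    rw [hval] at this
    linarith
  refine ⟨z + r0 • u, hkey, ?_⟩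
  have : dist z (z + r0 • u) = r0 := by
    rw [dist_comm, dist_eq_norm, add_sub_cancel_left, norm_smul, hu, mul_one,
      Real.norm_eq_abs, abs_of_nonneg hr0pos.le]
  rw [this]

set_option maxHeartbeats 1000000 in
/-- **Theorem 1(i)** (specialized to the closed-loop vector field):
safety / forward invariance of the constraint set `C = {x : h x ≥ 0}`. -/
theorem typeII_zcbf_safety (n : ℕ)
    (f : EuclideanSpace ℝ (Fin n) → EuclideanSpace ℝ (Fin n))
    (h : EuclideanSpace ℝ (Fin n) → ℝ) (a b : ℝ) (α : ℝ → ℝ)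
    (hf : LocallyLipschitz f) (hh : ContDiff ℝ 1 h)
    (ha : 0 < a) (hb : 0 < b)
    (hα : Continuous α) (hα0 : α 0 = 0)
    (hzcbf : ∀ x, h x ∈ Set.Icc (-b) a → ⟪gradient h x, f x⟫ ≥ -α (h x))
    (hgrad : ∀ x, h x = 0 → gradient h x ≠ 0) :
    ∀ T : ℝ≥0∞, 0 < T →
      ∀ x : ℝ → EuclideanSpace ℝ (Fin n),
        (∀ t : ℝ, 0 ≤ t → ENNReal.ofReal t < T → HasDerivAt x (f (x t)) t) →
        h (x 0) ≥ 0 →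
        ∀ t : ℝ, 0 ≤ t → ENNReal.ofReal t < T → h (x t) ≥ 0 := by
  intro T hT x hx hx0 t1 ht1 ht1T
  by_contra hneg
  push_neg at hneg
  -- derivative available on [0, t1]
  have hderiv : ∀ t : ℝ, 0 ≤ t → t ≤ t1 → HasDerivAt x (f (x t)) t := fun t h0 h1 =>
    hx t h0 (lt_of_le_of_lt (ENNReal.ofReal_le_ofReal h1) ht1T)
  have hxc : ∀ t : ℝ, 0 ≤ t → t ≤ t1 → ContinuousAt x t := fun t h0 h1 =>
    (hderiv t h0 h1).continuousAt
  set m : ℝ → ℝ := fun t => h (x t) with hmdef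
  have hmc : ∀ t : ℝ, 0 ≤ t → t ≤ t1 → ContinuousAt m t := fun t h0 h1 =>
    hh.continuous.continuousAt.comp (hxc t h0 h1)
  have hm0 : 0 ≤ m 0 := hx0
  have hmt1 : m t1 < 0 := hneg
  have h0t1 : (0 : ℝ) ≤ t1 := ht1
  -- last time the trajectory had nonnegative h
  set S : Set ℝ := {t | t ∈ Icc (0 : ℝ) t1 ∧ 0 ≤ m t} with hSdef
  have hS0 : (0 : ℝ) ∈ S := ⟨⟨le_refl 0, h0t1⟩, hm0⟩
  have hSne : S.Nonempty := ⟨0, hS0⟩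
  have hSbdd : BddAbove S := ⟨t1, fun t ht => ht.1.2⟩
  have hScl : IsClosed S := by
    have hmon : ContinuousOn m (Icc 0 t1) := fun t ht => (hmc t ht.1 ht.2).continuousWithinAt
    have h1 : IsClosed (Icc (0:ℝ) t1 ∩ m ⁻¹' (Ici (0:ℝ))) :=
      hmon.preimage_isClosed_of_isClosed isClosed_Icc isClosed_Ici
    have h2 : S = Icc (0:ℝ) t1 ∩ m ⁻¹' (Ici (0:ℝ)) := by
      ext t
      simp only [hSdef, Set.mem_setOf_eq, Set.mem_inter_iff, Set.mem_preimage, Set.mem_Ici]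
    rw [h2]
    exact h1
  set τ : ℝ := sSup S with hτdef
  have hτS : τ ∈ S := hScl.csSup_mem hSne hSbdd
  have hτ0 : 0 ≤ τ := hτS.1.1
  have hτt1 : τ ≤ t1 := hτS.1.2
  have hmτ : 0 ≤ m τ := hτS.2
  have hτlt : τ < t1 := lt_of_le_of_ne hτt1 (by
    intro he
    rw [he] at hmτ
    linarith)
  have hafter : ∀ t, τ < t → t ≤ t1 → m t < 0 := by
    intro t htτ htt1
    by_contra hge
    push_neg at hge
    have : t ∈ S := ⟨⟨by linarith, htt1⟩, hge⟩
    exact absurd (le_csSup hSbdd this) (by linarith)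
  have hmτ0 : m τ = 0 := by
    by_contra hne
    have hpos : 0 < m τ := lt_of_le_of_ne hmτ (Ne.symm hne)
    have hev : ∀ᶠ u in nhds τ, 0 < m u := (hmc τ hτ0 hτt1) (Ioi_mem_nhds hpos)
    rw [Metric.eventually_nhds_iff] at hev
    obtain ⟨δ', hδ', hball⟩ := hev
    set t := min t1 (τ + δ' / 2) with htdef
    have htτ : τ < t := lt_min hτlt (by linarith)
    have htt1 : t ≤ t1 := min_le_left _ _
    have hdist : dist t τ < δ' := by
      rw [Real.dist_eq, abs_of_nonneg (by linarith)]
      have : t ≤ τ + δ' / 2 := min_le_right _ _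
      linarith
    exact absurd (hball hdist) (not_lt.2 (hafter t htτ htt1).le)
  -- setup around the crossing point
  set p : EuclideanSpace ℝ (Fin n) := x τ with hpdef
  have hp0 : h p = 0 := hmτ0
  have hg : gradient h p ≠ 0 := hgrad p hp0
  have hg0 : 0 < ‖gradient h p‖ := norm_pos_iff.2 hg
  set g0 : ℝ := ‖gradient h p‖ with hg0def
  -- Lipschitz neighborhood for f
  obtain ⟨L, s, hs, hLf⟩ := hf p
  obtain ⟨ε1, hε1, hball1⟩ := Metric.mem_nhds_iff.1 hs
  -- gradient continuity neighborhood
  have hgc : Continuous (gradient h) := by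
    have : Continuous fun z => (InnerProductSpace.toDual ℝ (EuclideanSpace ℝ (Fin n))).symm
        (fderiv ℝ h z) :=
      (LinearIsometryEquiv.continuous _).comp (hh.continuous_fderiv one_ne_zero)
    exact this
  have hgev : ∀ᶠ w in nhds p, ‖gradient h w - gradient h p‖ ≤ g0 / 4 := by
    have : ContinuousAt (fun w => ‖gradient h w - gradient h p‖) p :=
      (hgc.sub continuous_const).norm.continuousAt
    have h0 : (fun w => ‖gradient h w - gradient h p‖) p = 0 := by simp
    have := this (Iio_mem_nhds (show (fun w => ‖gradient h w - gradient h p‖) p < g0 / 4 by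
      rw [h0]; positivity))
    filter_upwards [this] with w hw using le_of_lt hw
  rw [Metric.eventually_nhds_iff] at hgev
  obtain ⟨ε2, hε2, hball2⟩ := hgev
  set ε : ℝ := min ε1 ε2 with hεdef
  have hε : 0 < ε := lt_min hε1 hε2
  have hballs : Metric.ball p ε ⊆ s := fun w hw =>
    hball1 (Metric.ball_subset_ball (min_le_left _ _) hw)
  have hnear : ∀ w ∈ Metric.ball p ε, ‖gradient h w - gradient h p‖ ≤ g0 / 4 := by
    intro w hw
    exact hball2 (lt_of_lt_of_le hw (min_le_right _ _))
  -- choose t2 close to τ so the trajectory stays in a small ball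
  have hxτc : ContinuousAt x τ := hxc τ hτ0 hτt1
  have hevx : ∀ᶠ t in nhds τ, x t ∈ Metric.ball p (ε / 8) :=
    hxτc (Metric.ball_mem_nhds p (by positivity))
  rw [Metric.eventually_nhds_iff] at hevx
  obtain ⟨δ', hδ', hballx⟩ := hevx
  set t2 : ℝ := min t1 (τ + δ' / 2) with ht2def
  have hτt2 : τ < t2 := lt_min hτlt (by linarith)
  have ht2t1 : t2 ≤ t1 := min_le_left _ _
  have hxball : ∀ t ∈ Icc τ t2, x t ∈ Metric.ball p (ε / 8) := by
    intro t ht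
    apply hballx
    rw [Real.dist_eq, abs_of_nonneg (by linarith [ht.1])]
    have : t ≤ τ + δ' / 2 := le_trans ht.2 (min_le_right _ _)
    linarith
  -- the safe set
  set C : Set (EuclideanSpace ℝ (Fin n)) := {z | 0 ≤ h z} with hCdef
  have hCcl : IsClosed C := isClosed_le continuous_const hh.continuous
  have hpC : p ∈ C := le_of_eq hp0.symm
  have hCne : C.Nonempty := ⟨p, hpC⟩
  set D : ℝ → ℝ := fun t => Metric.infDist (x t) C with hDdef
  have hDnonneg : ∀ t, 0 ≤ D t := fun t => Metric.infDist_nonneg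
  -- continuity of D on [τ, t2]
  have hDcont : ContinuousOn D (Icc τ t2) := by
    intro t ht
    exact ((Metric.continuous_infDist_pt C).continuousAt.comp
      (hxc t (by linarith [ht.1]) (le_trans ht.2 ht2t1))).continuousWithinAt
  -- the differential inequality for D
  have hf' : ∀ t ∈ Ico τ t2, ∀ r : ℝ, (L : ℝ) * D t < r →
      ∃ᶠ u in nhdsWithin t (Ioi t), (u - t)⁻¹ * (D u - D t) < r := by
    intro t ht r hr
    have ht0 : 0 ≤ t := le_trans hτ0 ht.1
    have htt1 : t ≤ t1 := le_trans ht.2.le ht2t1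
    have hxtd := hderiv t ht0 htt1
    apply Filter.Eventually.frequently
    by_cases hcase : 0 < m t
    · -- h (x t) > 0 : D is locally zero
      have hDt : D t = 0 := Metric.infDist_zero_of_mem hcase.le
      have hrpos : 0 < r := by
        rw [hDt, mul_zero] at hr
        exact hr
      have hev : ∀ᶠ u in nhds t, 0 < m u := (hmc t ht0 htt1) (Ioi_mem_nhds hcase)
      have hev' : ∀ᶠ u in nhdsWithin t (Ioi t), 0 < m u := hev.filter_mono nhdsWithin_le_nhds
      filter_upwards [hev', self_mem_nhdsWithin] with u hu huIoi
      have hDu : D u = 0 := Metric.infDist_zero_of_mem hu.le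
      rw [hDu, hDt]
      simpa using hrpos
    · -- h (x t) ≤ 0 : nearest-point argument
      push_neg at hcase
      obtain ⟨y, hyC, hyd⟩ := hCcl.exists_infDist_eq_dist hCne (x t)
      have hxtball : x t ∈ Metric.ball p (ε / 8) := hxball t ⟨ht.1, ht.2.le⟩
      have hDle : D t ≤ dist (x t) p := Metric.infDist_le_dist_of_mem hpC
      have hy0 : h y = 0 := by
        by_contra hne
        have hypos : 0 < h y := lt_of_le_of_ne hyC (Ne.symm hne)
        have hopen : IsOpen {w | 0 < h w} := isOpen_lt continuous_const hh.continuous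
        obtain ⟨ρ, hρ, hballρ⟩ := Metric.isOpen_iff.1 hopen y hypos
        rcases eq_or_ne (x t) y with heq | hneq
        · have hyle : h y ≤ 0 := by rw [← heq]; exact hcase
          linarith
        · have hd : 0 < dist (x t) y := dist_pos.2 hneq
          set κ : ℝ := min (ρ / 2) (dist (x t) y) / dist (x t) y with hκdef
          have hκpos : 0 < κ := div_pos (lt_min (by linarith) hd) hd
          have hκle : κ ≤ 1 := by
            rw [hκdef, div_le_one hd]
            exact min_le_right _ _
          set y' := y + κ • (x t - y) with hy'def
          have hy'ball : y' ∈ Metric.ball y ρ := by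
            show dist y' y < ρ
            rw [hy'def, dist_eq_norm]
            simp only [add_sub_cancel_left, norm_smul, Real.norm_eq_abs,
              abs_of_nonneg hκpos.le]
            rw [hκdef, ← dist_eq_norm, div_mul_cancel₀ _ hd.ne']
            calc min (ρ / 2) (dist (x t) y) ≤ ρ / 2 := min_le_left _ _
              _ < ρ := by linarith
          have hy'C : y' ∈ C := by
            have h0 : 0 < h y' := hballρ hy'ball
            show 0 ≤ h y'
            exact h0.le
          have hy'dist : dist (x t) y' = dist (x t) y - min (ρ / 2) (dist (x t) y) := by
            rw [hy'def, dist_eq_norm]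
            have : x t - (y + κ • (x t - y)) = (1 - κ) • (x t - y) := by
              rw [sub_smul, one_smul]; abel
            rw [this, norm_smul, Real.norm_eq_abs, abs_of_nonneg (by linarith),
              ← dist_eq_norm, sub_mul, one_mul, hκdef, div_mul_cancel₀ _ hd.ne']
          have : Metric.infDist (x t) C ≤ dist (x t) y' := Metric.infDist_le_dist_of_mem hy'C
          rw [hyd] at this
          rw [hy'dist] at this
          have hminpos : 0 < min (ρ / 2) (dist (x t) y) := lt_min (by linarith) hd
          linarith
      -- geometric facts about y
      have hyp : dist y p < ε / 4 := by
        have h1 : dist y (x t) = D t := by rw [dist_comm]; exact hyd.symm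
        have h2 : dist (x t) p < ε / 8 := hxtball
        calc dist y p ≤ dist y (x t) + dist (x t) p := dist_triangle _ _ _
          _ = D t + dist (x t) p := by rw [h1]
          _ ≤ dist (x t) p + dist (x t) p := by linarith [hDle]
          _ < ε / 4 := by linarith
      have hyball : y ∈ Metric.ball p ε := by
        rw [Metric.mem_ball]
        linarith
      have hxtball' : x t ∈ Metric.ball p ε := by
        rw [Metric.mem_ball]
        have := hxtball
        rw [Metric.mem_ball] at this
        linarith
      -- ZCBF condition at y
      have hfy : 0 ≤ ⟪gradient h y, f y⟫ := by
        have := hzcbf y (by rw [hy0]; constructor <;> linarith)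
        rw [hy0, hα0] at this
        linarith
      set v := f y with hvdef
      set c : ℝ := r - (L : ℝ) * D t with hcdef
      have hcpos : 0 < c := by rw [hcdef]; linarith
      -- derivative of ψ u = h (y + (u - t) • v)
      set ψ : ℝ → ℝ := fun u => h (y + (u - t) • v) with hψdef
      set dψ : ℝ := ⟪gradient h y, v⟫ with hdψdef
      have hψd : HasDerivAt ψ dψ t := by
        have hcurve : HasDerivAt (fun u : ℝ => y + (u - t) • v) v t := by
          simpa using (((hasDerivAt_id t).sub_const t).smul_const v).const_add y
        have hdiff := (hh.differentiable one_ne_zero (y + (t - t) • v)).hasFDerivAt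
        have hcomp := hdiff.comp_hasDerivAt t hcurve
        have heq : y + (t - t) • v = y := by simp
        rw [heq] at hcomp
        have : dψ = fderiv ℝ h y v := by
          simp only [hdψdef, gradient]
          exact InnerProductSpace.toDual_symm_apply
        rw [this]
        exact hcomp
      have hψt : ψ t = 0 := by simp [hψdef, hy0]
      -- little-o estimates
      have hev1 : ∀ᶠ u in nhdsWithin t (Ioi t),
          ‖x u - x t - (u - t) • f (x t)‖ ≤ c / 4 * (u - t) := by
        have hlo := hasDerivAt_iff_isLittleO.1 hxtd
        have := hlo.def (show (0 : ℝ) < c / 4 by positivity)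
        filter_upwards [this.filter_mono nhdsWithin_le_nhds, self_mem_nhdsWithin]
          with u hu huIoi
        rw [Real.norm_eq_abs, abs_of_nonneg (by simp [Set.mem_Ioi] at huIoi; linarith)] at hu
        exact hu
      have hev2 : ∀ᶠ u in nhdsWithin t (Ioi t),
          -ψ u ≤ g0 * c / 16 * (u - t) := by
        have hlo := hasDerivAt_iff_isLittleO.1 hψd
        have hpos : (0 : ℝ) < g0 * c / 16 := by positivity
        have := hlo.def hpos
        filter_upwards [this.filter_mono nhdsWithin_le_nhds, self_mem_nhdsWithin]
          with u hu huIoi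
        simp only [Set.mem_Ioi] at huIoi
        rw [Real.norm_eq_abs, Real.norm_eq_abs, abs_of_nonneg (by linarith : (0:ℝ) ≤ u - t)]
          at hu
        have habs := abs_le.1 hu
        have h1 : ψ u - ψ t - (u - t) • dψ ≥ -(g0 * c / 16 * (u - t)) := habs.1
        rw [hψt] at h1
        have h2 : (u - t) • dψ = (u - t) * dψ := rfl
        rw [h2] at h1
        have h3 : 0 ≤ (u - t) * dψ := mul_nonneg (by linarith) hfy
        linarith
      -- smallness conditions
      have hev3 : ∀ᶠ u in nhdsWithin t (Ioi t),
          u - t ≤ min 1 (min (4 * ε / (1 + c)) ((ε / 8) / (1 + ‖v‖))) := by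
        set η := min 1 (min (4 * ε / (1 + c)) ((ε / 8) / (1 + ‖v‖))) with hηdef
        have hηpos : 0 < η := by
          apply lt_min one_pos
          apply lt_min <;> positivity
        have : Ioo t (t + η) ∈ nhdsWithin t (Ioi t) :=
          Ioo_mem_nhdsGT_of_mem ⟨le_refl t, by linarith⟩
        filter_upwards [this] with u hu
        linarith [hu.2]
      filter_upwards [hev1, hev2, hev3, self_mem_nhdsWithin] with u hu1 hu2 hu3 huIoi
      simp only [Set.mem_Ioi] at huIoi
      set sδ : ℝ := u - t with hsδdef
      have hsδpos : 0 < sδ := by rw [hsδdef]; linarith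
      set z := y + sδ • v with hzdef
      have hψuz : ψ u = h z := rfl
      -- find a point z' of C close to z
      have hzfar : ∃ z', 0 ≤ h z' ∧ dist z z' ≤ c / 4 * sδ := by
        rcases le_or_gt 0 (h z) with hge | hlt
        · exact ⟨z, hge, by rw [dist_self]; positivity⟩
        · have hzball : z ∈ Metric.ball p (ε / 2) := by
            rw [Metric.mem_ball]
            have h1 : dist z y = sδ * ‖v‖ := by
              rw [hzdef, dist_eq_norm]
              simp [norm_smul, abs_of_nonneg hsδpos.le]
            have h2 : sδ * ‖v‖ ≤ ε / 8 := by
              have hb1 : sδ ≤ (ε / 8) / (1 + ‖v‖) :=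
                le_trans hu3 (le_trans (min_le_right _ _) (min_le_right _ _))
              have hv1 : 0 < 1 + ‖v‖ := by positivity
              calc sδ * ‖v‖ ≤ ((ε / 8) / (1 + ‖v‖)) * ‖v‖ :=
                    mul_le_mul_of_nonneg_right hb1 (norm_nonneg _)
                _ ≤ (ε / 8) / (1 + ‖v‖) * (1 + ‖v‖) := by
                    apply mul_le_mul_of_nonneg_left (by linarith) (by positivity)
                _ = ε / 8 := div_mul_cancel₀ _ hv1.ne'
            calc dist z p ≤ dist z y + dist y p := dist_triangle _ _ _
              _ ≤ ε / 8 + ε / 4 := by rw [h1]; linarith [hyp]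
              _ < ε / 2 := by linarith
          have hnegz : -h z ≤ g0 * c / 16 * sδ := by rw [← hψuz]; exact hu2
          have hsmall : 2 / g0 * (-h z) ≤ ε / 2 := by
            have h1 : 2 / g0 * (-h z) ≤ 2 / g0 * (g0 * c / 16 * sδ) := by
              apply mul_le_mul_of_nonneg_left hnegz (by positivity)
            have h2 : 2 / g0 * (g0 * c / 16 * sδ) = c / 8 * sδ := by
              field_simp
              ring
            have h3 : sδ ≤ 4 * ε / (1 + c) :=
              le_trans hu3 (le_trans (min_le_right _ _) (min_le_left _ _))
            have h4 : c / 8 * sδ ≤ c / 8 * (4 * ε / (1 + c)) :=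
              mul_le_mul_of_nonneg_left h3 (by positivity)
            have h5 : c / 8 * (4 * ε / (1 + c)) ≤ ε / 2 := by
              have h51 : c / (1 + c) ≤ 1 := by
                rw [div_le_one (by positivity)]
                linarith
              calc c / 8 * (4 * ε / (1 + c)) = (c / (1 + c)) * (ε / 2) := by ring
                _ ≤ 1 * (ε / 2) := mul_le_mul_of_nonneg_right h51 (by positivity)
                _ = ε / 2 := one_mul _
            linarith
          obtain ⟨z', hz'1, hz'2⟩ := typeII_climb hh hε hg hnear hzball hlt hsmall
          refine ⟨z', hz'1, le_trans hz'2 ?_⟩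
          have h1 : 2 / g0 * (-h z) ≤ 2 / g0 * (g0 * c / 16 * sδ) :=
            mul_le_mul_of_nonneg_left hnegz (by positivity)
          have h2 : 2 / g0 * (g0 * c / 16 * sδ) = c / 8 * sδ := by
            field_simp; ring
          have : c / 8 * sδ ≤ c / 4 * sδ :=
            mul_le_mul_of_nonneg_right (by linarith) hsδpos.le
          linarith
      obtain ⟨z', hz'C, hz'd⟩ := hzfar
      -- assemble the slope estimate
      have hlip : dist (f (x t)) (f y) ≤ (L : ℝ) * dist (x t) y :=
        hLf.dist_le_mul (x t) (hballs hxtball') y (hballs hyball)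
      have hdxy : dist (x t) y = D t := hyd.symm
      have hmain : dist (x u) z ≤ c / 4 * sδ + D t + sδ * ((L : ℝ) * D t) := by
        have hdecomp : x u - z =
            (x u - x t - sδ • f (x t)) + (x t - y) + sδ • (f (x t) - v) := by
          rw [hzdef]
          rw [smul_sub]
          abel
        rw [dist_eq_norm, hdecomp]
        calc ‖(x u - x t - sδ • f (x t)) + (x t - y) + sδ • (f (x t) - v)‖
            ≤ ‖x u - x t - sδ • f (x t)‖ + ‖x t - y‖ + ‖sδ • (f (x t) - v)‖ :=
              norm_add₃_le
          _ ≤ c / 4 * sδ + D t + sδ * ((L : ℝ) * D t) := by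
              have e1 : ‖x u - x t - sδ • f (x t)‖ ≤ c / 4 * sδ := hu1
              have e2 : ‖x t - y‖ = D t := by rw [← dist_eq_norm, hdxy]
              have e3 : ‖sδ • (f (x t) - v)‖ ≤ sδ * ((L : ℝ) * D t) := by
                rw [norm_smul, Real.norm_eq_abs, abs_of_nonneg hsδpos.le]
                apply mul_le_mul_of_nonneg_left _ hsδpos.le
                rw [← dist_eq_norm]
                rw [← hdxy]
                exact hlip
              exact add_le_add (add_le_add e1 e2.le) e3
      have hDu : D u ≤ dist (x u) z + c / 4 * sδ := by
        calc D u ≤ dist (x u) z' := Metric.infDist_le_dist_of_mem hz'C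
          _ ≤ dist (x u) z + dist z z' := dist_triangle _ _ _
          _ ≤ dist (x u) z + c / 4 * sδ := by linarith
      have hfinal : D u - D t ≤ ((L : ℝ) * D t + c / 2) * sδ := by
        have hDu2 : D u ≤ c / 4 * sδ + D t + sδ * ((L : ℝ) * D t) + c / 4 * sδ := by
          linarith [hDu, hmain]
        have hexp : ((L : ℝ) * D t + c / 2) * sδ
            = c / 4 * sδ + sδ * ((L : ℝ) * D t) + c / 4 * sδ := by ring
        linarith
      have hrs : ((L : ℝ) * D t + c / 2) < r := by rw [hcdef]; linarith
      have hslope : sδ⁻¹ * (D u - D t) < r := by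
        have h1 : D u - D t < r * sδ :=
          lt_of_le_of_lt hfinal (mul_lt_mul_of_pos_right hrs hsδpos)
        have h2 : sδ⁻¹ * (D u - D t) < sδ⁻¹ * (r * sδ) :=
          mul_lt_mul_of_pos_left h1 (by positivity)
        have h3 : sδ⁻¹ * (r * sδ) = r := by field_simp
        rw [h3] at h2
        exact h2
      exact hslope
  -- apply the Grönwall-type inequality
  have hbound : ∀ t ∈ Ico τ t2, (L : ℝ) * D t ≤ (L : ℝ) * D t + 0 := by
    intro t _; simp
  have hDτ : D τ ≤ 0 := le_of_eq (Metric.infDist_zero_of_mem hpC)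
  have hgron := le_gronwallBound_of_liminf_deriv_right_le hDcont hf' hDτ hbound t2
    (right_mem_Icc.2 hτt2.le)
  rw [gronwallBound_ε0_δ0] at hgron
  have hDt2 : D t2 = 0 := le_antisymm hgron (hDnonneg t2)
  have : x t2 ∈ C := (hCcl.mem_iff_infDist_zero hCne).2 hDt2
  have : 0 ≤ m t2 := this
  exact absurd this (not_le.2 (hafter t2 hτt2 ht2t1))
end

section
/- Let n, m ∈ ℕ and consider the control-affine system x' = f(x) + g(x)u with f : ℝⁿ → ℝⁿ and g : ℝⁿ → ℝ^{n×m} locally Lipschitz continuous. Let h : ℝⁿ → ℝ be continuously differentiable with ∇h(x) ≠ 0 whenever h(x) = 0, let a, b > 0, and let α : ℝ → ℝ be continuous with α(0) = 0 and α strictly increasing on [0, ∞). Let U ⊆ ℝᵐ be convex, and let u_s, u_nom : ℝⁿ → ℝᵐ be locally Lipschitz continuous with u_s(x) ∈ U and u_nom(x) ∈ U for all x, such that ⟪∇h(x), f(x) + g(x) u_s(x)⟫ ≥ -α(h(x)) for every x with h(x) ∈ [-b, a]. Let κ : ℝ → ℝ be locally Lipschitz with κ(0) = 0, κ(a) = 1,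 0 ≤ κ ≤ 1 on [0, a], and let φ_a(s) = 1 for s > a, κ(s) for s ∈ [0, a], 0 for s < 0. Define the mixed-initiative controller u*(x) = (1 - φ_a(h(x))) u_s(x) + φ_a(h(x)) u_nom(x). Then: (i) u*(x) ∈ U for all x ∈ ℝⁿ; (ii) u* is locally Lipschitz continuous; (iii) every differentiable curve x : [0, T) → ℝⁿ with x'(t) = f(x(t)) + g(x(t)) u*(x(t)) for all t and h(x(0)) ≥ 0 satisfies h(x(t)) ≥ 0 for all t ∈ [0, T). (Theorem 2.) -/
set_option linter.unusedSectionVars false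
set_option linter.deprecated false
set_option maxHeartbeats 1000000

open scoped RealInnerProductSpace ENNReal Topology
open Set Metric Filter

section auxlemmas

variable {E F G : Type*} [NormedAddCommGroup E] [NormedSpace ℝ E]
  [NormedAddCommGroup F] [NormedSpace ℝ F] [NormedAddCommGroup G] [NormedSpace ℝ G]

lemma myLocLip_smul {c : E → ℝ} {u : E → F} (hc : LocallyLipschitz c)
    (hu : LocallyLipschitz u) : LocallyLipschitz fun p => c p • u p :=
  by have := ((contDiff_fst.smul contDiff_snd : ContDiff ℝ 1
    fun q : ℝ × F => q.1 • q.2).locallyLipschitz).comp (hc.prodMk hu); exact this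

lemma myLocLip_clm {g : E → F →L[ℝ] G} {u : E → F} (hg : LocallyLipschitz g)
    (hu : LocallyLipschitz u) : LocallyLipschitz fun p => g p (u p) :=
  by have := ((contDiff_fst.clm_apply contDiff_snd : ContDiff ℝ 1
    fun q : (F →L[ℝ] G) × F => q.1 q.2).locallyLipschitz).comp (hg.prodMk hu); exact this

lemma exists_last_zero {y : ℝ → ℝ} {c d : ℝ} (hcd : c ≤ d)
    (hy : ContinuousOn y (Icc c d)) (hc : 0 ≤ y c) (hd : y d < 0) :
    ∃ t₀ ∈ Ico c d, y t₀ = 0 ∧ ∀ s ∈ Ioc t₀ d, y s < 0 := by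
  set S := {s ∈ Icc c d | 0 ≤ y s} with hS
  have hSne : S.Nonempty := ⟨c, ⟨left_mem_Icc.2 hcd, hc⟩⟩
  have hSbdd : BddAbove S := ⟨d, fun s hs => hs.1.2⟩
  have hSclosed : IsClosed S := hy.preimage_isClosed_of_isClosed isClosed_Icc isClosed_Ici
  set t₀ := sSup S with ht₀
  have hmem : t₀ ∈ S := hSclosed.csSup_mem hSne hSbdd
  have ht₀d : t₀ < d := lt_of_le_of_ne hmem.1.2 (fun hh => by rw [hh] at hmem; linarith [hmem.2])
  have hlt : ∀ s ∈ Ioc t₀ d, y s < 0 := by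
    intro s hs
    by_contra hge
    push_neg at hge
    have : s ∈ S := ⟨⟨hmem.1.1.trans hs.1.le, hs.2⟩, hge⟩
    exact absurd (le_csSup hSbdd this) (not_le.2 hs.1)
  refine ⟨t₀, ⟨hmem.1.1, ht₀d⟩, le_antisymm ?_ hmem.2, hlt⟩
  have hIoc : Ioc t₀ d ∈ 𝓝[>] t₀ := Ioc_mem_nhdsGT_of_mem ⟨le_rfl, ht₀d⟩
  have hcw : ContinuousWithinAt y (Ioi t₀) t₀ :=
    (hy t₀ hmem.1).mono_of_mem_nhdsWithin (mem_of_superset hIoc (Ioc_subset_Icc_self.trans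
      (Icc_subset_Icc_left hmem.1.1)))
  exact le_of_tendsto hcw (Filter.eventually_of_mem hIoc fun s hs => (hlt s hs).le)

lemma hasDerivWithinAt_Ici_of_Icc {z : ℝ → E} {w : E} {c d s : ℝ} (hs : s ∈ Ico c d)
    (h : HasDerivWithinAt z w (Icc c d) s) : HasDerivWithinAt z w (Ici s) s := by
  refine (h.mono (Icc_subset_Icc_left hs.1)).mono_of_mem_nhdsWithin ?_
  rw [← Ici_inter_Iic]
  exact inter_mem self_mem_nhdsWithin (mem_nhdsWithin_of_mem_nhds (Iic_mem_nhds hs.2))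

lemma nonneg_of_pos_deriv {w w' : ℝ → ℝ} {c d δ : ℝ} (hδ : 0 < δ) (hcd : c ≤ d)
    (hw : ∀ s ∈ Set.Icc c d, HasDerivWithinAt w (w' s) (Set.Icc c d) s)
    (hwc : w c = 0)
    (hpos : ∀ s ∈ Set.Icc c d, -δ ≤ w s → w s ≤ 0 → 0 < w' s) :
    ∀ s ∈ Set.Icc c d, 0 ≤ w s := by
  by_contra hcon
  push_neg at hcon
  obtain ⟨s₁, hs₁, hws₁⟩ := hcon
  have hwcont : ContinuousOn w (Icc c d) := fun s hs => (hw s hs).continuousWithinAt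
  obtain ⟨c₀, hc₀, hwc₀, hlt⟩ := exists_last_zero hs₁.1
    (hwcont.mono (Icc_subset_Icc_right hs₁.2)) (le_of_eq hwc.symm) hws₁
  have hc₀d : c₀ ∈ Icc c d := ⟨hc₀.1, hc₀.2.le.trans hs₁.2⟩
  have hcw : ContinuousWithinAt w (Icc c d) c₀ := hwcont c₀ hc₀d
  obtain ⟨η, hη, hball⟩ := Metric.continuousWithinAt_iff.mp hcw δ hδ
  set s₂ := min (c₀ + η / 2) s₁ with hs₂def
  have hc₀s₂ : c₀ < s₂ := lt_min (by linarith) hc₀.2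
  have hs₂le : s₂ ≤ s₁ := min_le_right _ _
  have hsub : Icc c₀ s₂ ⊆ Icc c d := Icc_subset_Icc hc₀.1 (le_trans hs₂le hs₁.2)
  have hwge : ∀ s ∈ Icc c₀ s₂, -δ < w s := by
    intro s hs
    rcases eq_or_lt_of_le hs.1 with rfl | hlt'
    · rw [hwc₀]; linarith
    · have hd1 : dist s c₀ < η := by
        rw [Real.dist_eq, abs_of_nonneg (by linarith [hs.1])]
        have h2 := hs.2.trans (min_le_left _ _)
        linarith
      have h3 := hball (hsub hs) hd1
      rw [Real.dist_eq, hwc₀, sub_zero] at h3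
      have := abs_lt.mp h3
      linarith [this.1]
  have hderivAt : ∀ u ∈ Ioo c₀ s₂, HasDerivAt w (w' u) u := by
    intro u hu
    have humem : u ∈ Icc c d := hsub (Ioo_subset_Icc_self hu)
    exact (hw u humem).hasDerivAt (Icc_mem_nhds (lt_of_le_of_lt hc₀.1 hu.1)
      (lt_of_lt_of_le hu.2 (hs₂le.trans hs₁.2)))
  obtain ⟨ξ, hξ, hslope⟩ := exists_hasDerivAt_eq_slope w w' hc₀s₂ (hwcont.mono hsub) hderivAt
  have hws₂ : w s₂ < 0 := hlt s₂ ⟨hc₀s₂, hs₂le⟩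
  have hslopeneg : w' ξ < 0 := by
    rw [hslope, hwc₀, sub_zero]
    exact div_neg_of_neg_of_pos hws₂ (by linarith)
  have hξmem : ξ ∈ Icc c d := hsub (Ioo_subset_Icc_self hξ)
  have h1 : -δ ≤ w ξ := (hwge ξ (Ioo_subset_Icc_self hξ)).le
  have h2 : w ξ ≤ 0 := (hlt ξ ⟨hξ.1, hξ.2.le.trans hs₂le⟩).le
  linarith [hpos ξ hξmem h1 h2]

lemma stays_in_ball {v : E → E} {z : ℝ → E} {x₀ : E} {c d r C : ℝ}
    (hcd : c ≤ d) (hr : 0 < r) (hC : 0 ≤ C)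
    (hz : ∀ s ∈ Icc c d, HasDerivWithinAt z (v (z s)) (Icc c d) s)
    (hzc : z c = x₀)
    (hbound : ∀ p ∈ closedBall x₀ r, ‖v p‖ ≤ C)
    (hCd : C * (d - c) ≤ r / 2) :
    ∀ s ∈ Icc c d, z s ∈ closedBall x₀ (r / 2) := by
  have hzcont : ContinuousOn z (Icc c d) := fun s hs => (hz s hs).continuousWithinAt
  have key : ∀ s ∈ Icc c d, (∀ u ∈ Icc c s, z u ∈ closedBall x₀ r) →
      ∀ u ∈ Icc c s, z u ∈ closedBall x₀ (r / 2) := by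
    intro s hs hin u hu
    have hsub : Icc c s ⊆ Icc c d := Icc_subset_Icc_right hs.2
    have hgron := norm_le_gronwallBound_of_norm_deriv_right_le
      (f := fun u => z u - x₀) (f' := fun u => v (z u)) (δ := 0) (K := 0) (ε := C)
      (a := c) (b := s)
      ((hzcont.mono hsub).sub continuousOn_const)
      (fun q hq => by
        have hq' : q ∈ Ico c d := ⟨hq.1, lt_of_lt_of_le hq.2 hs.2⟩
        exact (hasDerivWithinAt_Ici_of_Icc hq' (hz q (Ico_subset_Icc_self hq'))).sub_const x₀)
      (by simp [hzc])
      (fun q hq => by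
        have : ‖v (z q)‖ ≤ C := hbound _ (hin q (Ico_subset_Icc_self hq))
        simpa using this)
      u hu
    rw [gronwallBound_K0] at hgron
    simp only [zero_add] at hgron
    have h2 : C * (u - c) ≤ C * (d - c) := by
      apply mul_le_mul_of_nonneg_left _ hC
      linarith [hu.2, hs.2]
    rw [mem_closedBall, dist_eq_norm]
    linarith
  set S := {s ∈ Icc c d | ∀ u ∈ Icc c s, z u ∈ closedBall x₀ r} with hSdef
  have hcS : c ∈ S := by
    refine ⟨left_mem_Icc.2 hcd, fun u hu => ?_⟩
    have : u = c := le_antisymm hu.2 hu.1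
    rw [this, hzc]
    exact mem_closedBall_self hr.le
  have hSne : S.Nonempty := ⟨c, hcS⟩
  have hbddS : BddAbove S := ⟨d, fun s hs => hs.1.2⟩
  set s₀ := sSup S with hs₀def
  have hs₀mem : s₀ ∈ Icc c d := ⟨le_csSup hbddS hcS, csSup_le hSne (fun s hs => hs.1.2)⟩
  have hIco : ∀ u ∈ Ico c s₀, z u ∈ closedBall x₀ (r / 2) := by
    intro u hu
    obtain ⟨s, hsS, hus⟩ := exists_lt_of_lt_csSup hSne hu.2
    exact key s hsS.1 hsS.2 u ⟨hu.1, hus.le⟩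
  have hs₀half : z s₀ ∈ closedBall x₀ (r / 2) := by
    rcases eq_or_lt_of_le hs₀mem.1 with heq | hlt'
    · rw [← heq, hzc]; exact mem_closedBall_self (by linarith)
    · have hcw : ContinuousWithinAt z (Iio s₀) s₀ := by
        refine (hzcont s₀ hs₀mem).mono_of_mem_nhdsWithin (mem_of_superset
          (Ioo_mem_nhdsLT hlt') ?_)
        exact fun q hq => ⟨hq.1.le, hq.2.le.trans hs₀mem.2⟩
      refine Metric.isClosed_closedBall.mem_of_tendsto hcw (Filter.eventually_of_mem
        (Ioo_mem_nhdsLT hlt') fun q hq => hIco q ⟨hq.1.le, hq.2⟩)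
  have hs₀S : s₀ ∈ S := by
    refine ⟨hs₀mem, fun u hu => ?_⟩
    rcases eq_or_lt_of_le hu.2 with heq | hlt'
    · rw [heq]
      exact closedBall_subset_closedBall (by linarith) hs₀half
    · exact closedBall_subset_closedBall (by linarith) (hIco u ⟨hu.1, hlt'⟩)
  have hs₀d : s₀ = d := by
    by_contra hne
    have hlt' : s₀ < d := lt_of_le_of_ne hs₀mem.2 hne
    obtain ⟨η, hη, hball⟩ := Metric.continuousWithinAt_iff.mp (hzcont s₀ hs₀mem) (r / 4)
      (by linarith)
    set s' := min (s₀ + η / 2) d with hs'def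
    have hs₀s' : s₀ < s' := lt_min (by linarith) hlt'
    have hs'S : s' ∈ S := by
      refine ⟨⟨hs₀mem.1.trans hs₀s'.le, min_le_right _ _⟩, fun u hu => ?_⟩
      rcases le_or_gt u s₀ with hle | hgt
      · exact hs₀S.2 u ⟨hu.1, hle⟩
      · have humem : u ∈ Icc c d := ⟨hu.1, hu.2.trans (min_le_right _ _)⟩
        have hd1 : dist u s₀ < η := by
          rw [Real.dist_eq, abs_of_nonneg (by linarith)]
          have := hu.2.trans (min_le_left _ _)
          linarith
        have h3 := hball humem hd1
        have h4 : dist (z s₀) x₀ ≤ r / 2 := hs₀half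
        rw [mem_closedBall]
        calc dist (z u) x₀ ≤ dist (z u) (z s₀) + dist (z s₀) x₀ := dist_triangle _ _ _
          _ ≤ r / 4 + r / 2 := by linarith
          _ ≤ r := by linarith
    exact absurd (le_csSup hbddS hs'S) (not_le.2 hs₀s')
  intro s hs
  exact key d (right_mem_Icc.2 hcd) (hs₀d ▸ hs₀S.2) s hs

lemma hasDerivWithinAt_comp_grad {E : Type*} [NormedAddCommGroup E] [InnerProductSpace ℝ E]
    [CompleteSpace E] {h : E → ℝ} (hh : ContDiff ℝ 1 h) {z : ℝ → E} {d : E} {s : Set ℝ}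
    {q : ℝ} (hz : HasDerivWithinAt z d s q) :
    HasDerivWithinAt (fun u => h (z u)) ⟪gradient h (z q), d⟫ s q := by
  have h1 := ((hh.differentiable one_ne_zero) (z q)).hasGradientAt.hasFDerivAt
  have h2 := h1.comp_hasDerivWithinAt q hz
  rw [InnerProductSpace.toDual_apply_apply] at h2
  exact h2

end auxlemmas
/-- **Theorem 2**: the mixed-initiative controller
`u*(x) = (1 - φ_a(h(x))) u_s(x) + φ_a(h(x)) u_nom(x)`
takes values in `U`, is locally Lipschitz continuous, and renders the
control-affine closed-loop system safe with respect to `C = {x : h x ≥ 0}`. -/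
theorem mixed_initiative_controller (n m : ℕ)
    (f : EuclideanSpace ℝ (Fin n) → EuclideanSpace ℝ (Fin n))
    (g : EuclideanSpace ℝ (Fin n) → (EuclideanSpace ℝ (Fin m) →L[ℝ] EuclideanSpace ℝ (Fin n)))
    (hf : LocallyLipschitz f) (hg : LocallyLipschitz g)
    (h : EuclideanSpace ℝ (Fin n) → ℝ) (hh : ContDiff ℝ 1 h)
    (hgrad : ∀ x, h x = 0 → gradient h x ≠ 0)
    (a b : ℝ) (ha : 0 < a) (hb : 0 < b)
    (α : ℝ → ℝ) (hα : Continuous α) (hα0 : α 0 = 0)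
    (hαmono : StrictMonoOn α (Set.Ici 0))
    (U : Set (EuclideanSpace ℝ (Fin m))) (hU : Convex ℝ U)
    (us unom : EuclideanSpace ℝ (Fin n) → EuclideanSpace ℝ (Fin m))
    (hus : LocallyLipschitz us) (hunom : LocallyLipschitz unom)
    (husU : ∀ x, us x ∈ U) (hunomU : ∀ x, unom x ∈ U)
    (huss : ∀ x, h x ∈ Set.Icc (-b) a →
      ⟪gradient h x, f x + g x (us x)⟫ ≥ -α (h x))
    (κ : ℝ → ℝ) (hκ : LocallyLipschitz κ)
    (hκ0 : κ 0 = 0) (hκa : κ a = 1)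
    (hκ01 : ∀ s ∈ Set.Icc 0 a, κ s ∈ Set.Icc (0 : ℝ) 1)
    (φ : ℝ → ℝ)
    (hφ : φ = fun s => if a < s then 1 else if 0 ≤ s then κ s else 0)
    (ustar : EuclideanSpace ℝ (Fin n) → EuclideanSpace ℝ (Fin m))
    (hustar : ustar = fun x => (1 - φ (h x)) • us x + φ (h x) • unom x) :
    -- (i) input constraints are respected
    (∀ x, ustar x ∈ U) ∧
    -- (ii) `u*` is locally Lipschitz continuous
    LocallyLipschitz ustar ∧
    -- (iii) safety of the closed-loop system with respect to `C = {x : h x ≥ 0}`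
    (∀ T : ℝ≥0∞, 0 < T →
      ∀ x : ℝ → EuclideanSpace ℝ (Fin n),
        (∀ t : ℝ, 0 ≤ t → ENNReal.ofReal t < T →
          HasDerivAt x (f (x t) + g (x t) (ustar (x t))) t) →
        h (x 0) ≥ 0 →
        ∀ t : ℝ, 0 ≤ t → ENNReal.ofReal t < T → h (x t) ≥ 0) := by
  have hφ01 : ∀ s, φ s ∈ Icc (0 : ℝ) 1 := by
    intro s
    rw [hφ]
    dsimp only
    split_ifs with h1 h2
    · exact ⟨zero_le_one, le_rfl⟩
    · exact hκ01 s ⟨h2, not_lt.1 h1⟩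
    · exact ⟨le_rfl, zero_le_one⟩
  refine ⟨?_, ?_, ?_⟩
  · -- part (i)
    intro p
    rw [hustar]
    exact hU (husU p) (hunomU p) (by linarith [(hφ01 (h p)).2]) (hφ01 (h p)).1 (by ring)
  · -- part (ii)
    have hφlip : LocallyLipschitz φ := by
      have heq : φ = κ ∘ (fun s => max 0 (min s a)) := by
        funext s
        rw [hφ]
        simp only [Function.comp_apply]
        by_cases h1 : a < s
        · rw [if_pos h1, min_eq_right h1.le, max_eq_right ha.le, hκa]
        · rw [if_neg h1, min_eq_left (not_lt.1 h1)]
          by_cases h2 : 0 ≤ s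
          · rw [if_pos h2, max_eq_right h2]
          · rw [if_neg h2, max_eq_left (le_of_lt (not_le.1 h2)), hκ0]
      rw [heq]
      exact hκ.comp ((LocallyLipschitz.id.min_const a).const_max 0)
    have hφh : LocallyLipschitz (fun p => φ (h p)) := hφlip.comp hh.locallyLipschitz
    rw [hustar]
    exact (myLocLip_smul ((LocallyLipschitz.const 1).sub hφh) hus).add
      (myLocLip_smul hφh hunom)
  · -- part (iii)
    intro T hT x hx hx0 t htnn htT
    by_contra hneg
    push_neg at hneg
    have hderiv : ∀ s ∈ Icc 0 t, HasDerivAt x (f (x s) + g (x s) (ustar (x s))) s := fun s hs =>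
      hx s hs.1 (lt_of_le_of_lt (ENNReal.ofReal_le_ofReal hs.2) htT)
    have hycont : ContinuousOn (fun s => h (x s)) (Icc 0 t) := fun s hs =>
      (hh.continuous.continuousAt.comp (hderiv s hs).continuousAt).continuousWithinAt
    obtain ⟨t₀, ht₀, hyt₀, hylt⟩ := exists_last_zero htnn hycont hx0 hneg
    set x₀ := x t₀ with hx₀def
    set grad₀ := gradient h x₀ with hgrad₀def
    have hg0 : grad₀ ≠ 0 := hgrad x₀ hyt₀
    have hgnorm : 0 < ‖grad₀‖ := norm_pos_iff.2 hg0
    set cc := ‖grad₀‖ ^ 2 / 2 with hccdef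
    have hccpos : 0 < cc := by positivity
    set F := fun p => f p + g p (us p) with hFdef
    have hFlip : LocallyLipschitz F := hf.add (myLocLip_clm hg hus)
    obtain ⟨K, sU, hsU, hKlip⟩ := hFlip x₀
    obtain ⟨r₁, hr₁, hball₁⟩ := Metric.mem_nhds_iff.mp hsU
    have hgradcont : Continuous (gradient h) := by
      have h1 : Continuous (fderiv ℝ h) := hh.continuous_fderiv one_ne_zero
      exact ((InnerProductSpace.toDual ℝ _).symm.continuous).comp h1
    have hOopen : IsOpen {p : EuclideanSpace ℝ (Fin n) |
        cc < ⟪gradient h p, grad₀⟫ ∧ |h p| < min a b} := by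
      rw [setOf_and]
      exact (isOpen_lt continuous_const (hgradcont.inner continuous_const)).inter
        (isOpen_lt (continuous_abs.comp hh.continuous) continuous_const)
    have hx₀O : x₀ ∈ {p : EuclideanSpace ℝ (Fin n) |
        cc < ⟪gradient h p, grad₀⟫ ∧ |h p| < min a b} := by
      constructor
      · rw [← hgrad₀def, real_inner_self_eq_norm_sq]
        rw [hccdef]
        nlinarith
      · rw [hyt₀]
        simpa using lt_min ha hb
    obtain ⟨r₂, hr₂, hball₂⟩ := Metric.mem_nhds_iff.mp (hOopen.mem_nhds hx₀O)
    set r := min r₁ r₂ / 2 with hrdef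
    have hrpos : 0 < r := by
      rw [hrdef]
      have := lt_min hr₁ hr₂
      linarith
    have hrlt : r < min r₁ r₂ := by
      rw [hrdef]
      have := lt_min hr₁ hr₂
      linarith
    have hrsub₁ : closedBall x₀ r ⊆ sU :=
      ((closedBall_subset_ball hrlt).trans (ball_subset_ball (min_le_left _ _))).trans hball₁
    have hrsub₂ : ∀ p ∈ closedBall x₀ r, cc < ⟪gradient h p, grad₀⟫ ∧ |h p| < min a b :=
      fun p hp => hball₂ ((closedBall_subset_ball hrlt).trans
        (ball_subset_ball (min_le_right _ _)) hp)
    have hKr : LipschitzOnWith K F (closedBall x₀ r) := hKlip.mono hrsub₁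
    obtain ⟨M₀, hM₀⟩ := (isCompact_closedBall x₀ r).exists_bound_of_continuousOn
      hFlip.continuous.continuousOn
    set M := max M₀ 0 with hMdef
    have hM0 : 0 ≤ M := le_max_right _ _
    set Cb := M + ‖grad₀‖ with hCbdef
    have hCb0 : 0 ≤ Cb := by positivity
    have hxc : ContinuousAt x t₀ := (hderiv t₀ (Ico_subset_Icc_self ht₀)).continuousAt
    obtain ⟨τ₃, hτ₃, hxball⟩ := Metric.continuousAt_iff.mp hxc (r / 2) (by linarith)
    set τ := min (t - t₀) (min (τ₃ / 2) ((r / 2) / (Cb + 1))) with hτdef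
    have hτpos : 0 < τ := lt_min (by linarith [ht₀.2]) (lt_min (by linarith) (by positivity))
    set s₁ := t₀ + τ with hs₁def
    have hs₁t : s₁ ≤ t := by
      have : τ ≤ t - t₀ := min_le_left _ _
      rw [hs₁def]; linarith
    have hCbτ : Cb * τ ≤ r / 2 := by
      have h1 : τ ≤ (r / 2) / (Cb + 1) := le_trans (min_le_right _ _) (min_le_right _ _)
      have h2 : τ * (Cb + 1) ≤ r / 2 := (le_div_iff₀ (by positivity)).mp h1
      nlinarith
    have hxin : ∀ s ∈ Icc t₀ s₁, x s ∈ closedBall x₀ (r / 2) := by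
      intro s hs
      have hd : dist s t₀ < τ₃ := by
        rw [Real.dist_eq, abs_of_nonneg (by linarith [hs.1])]
        have h2 : τ ≤ τ₃ / 2 := le_trans (min_le_right _ _) (min_le_left _ _)
        have h3 := hs.2
        rw [hs₁def] at h3
        linarith
      exact mem_closedBall.2 (le_of_lt (hxball hd))
    have hust : ∀ p, h p ≤ 0 → ustar p = us p := by
      intro p hp
      have hφ0 : φ (h p) = 0 := by
        rw [hφ]
        simp only
        rw [if_neg (by linarith : ¬ a < h p)]
        rcases lt_or_eq_of_le hp with hlt2 | heq
        · rw [if_neg (not_le.2 hlt2)]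
        · rw [if_pos (le_of_eq heq.symm), heq, hκ0]
      rw [hustar]
      simp [hφ0]
    have hyle : ∀ s ∈ Icc t₀ t, h (x s) ≤ 0 := by
      intro s hs
      rcases eq_or_lt_of_le hs.1 with heq | hlt2
      · rw [← heq]; exact le_of_eq hyt₀
      · exact (hylt s ⟨hlt2, hs.2⟩).le
    have hxF : ∀ s ∈ Icc t₀ t, HasDerivAt x (F (x s)) s := by
      intro s hs
      have h1 := hderiv s ⟨ht₀.1.trans hs.1, hs.2⟩
      rwa [hust _ (hyle s hs)] at h1
    -- main perturbation argument
    have main : ∀ ε : ℝ, 0 < ε → ε ≤ 1 →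
        ∃ p, 0 ≤ h p ∧ dist (x s₁) p ≤ gronwallBound 0 K (ε * ‖grad₀‖ + 0) (s₁ - t₀) := by
      intro ε hε hε1
      set v : EuclideanSpace ℝ (Fin n) → EuclideanSpace ℝ (Fin n) :=
        fun p => F p + ε • grad₀ with hvdef
      have hvlip : ∀ q : ℝ, LipschitzOnWith K v (closedBall x₀ r) := by
        intro q p hp p' hp'
        have h1 := hKr hp hp'
        simpa [hvdef, edist_add_right] using h1
      have hvbound : ∀ p ∈ closedBall x₀ r, ‖v p‖ ≤ Cb := by
        intro p hp
        calc ‖F p + ε • grad₀‖ ≤ ‖F p‖ + ‖ε • grad₀‖ := norm_add_le _ _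
          _ ≤ Cb := by
              have h1 := hM₀ p hp
              rw [norm_smul, Real.norm_eq_abs, abs_of_pos hε]
              have h2 : ‖F p‖ ≤ M := le_trans h1 (le_max_left _ _)
              have h3 : ε * ‖grad₀‖ ≤ ‖grad₀‖ := by nlinarith
              rw [hCbdef]; linarith
      have hPL : IsPicardLindelof (fun _ : ℝ => v) (tmin := t₀) (tmax := s₁)
          ⟨t₀, ⟨le_rfl, by rw [hs₁def]; linarith⟩⟩ x₀ ⟨r, hrpos.le⟩ 0 ⟨Cb, hCb0⟩ K :=
        { lipschitzOnWith := fun q _ => hvlip q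
          continuousOn := fun p _ => continuousOn_const
          norm_le := fun q _ p hp => hvbound p hp
          mul_max_le := by
            show Cb * max (s₁ - t₀) (t₀ - t₀) ≤ r - 0
            have he1 : s₁ - t₀ = τ := by rw [hs₁def]; ring
            rw [he1, sub_self, max_eq_left hτpos.le, sub_zero]
            exact le_trans hCbτ (by linarith) }
      obtain ⟨z, hz0', hzderiv⟩ := hPL.exists_eq_forall_mem_Icc_hasDerivWithinAt₀
      have hz0 : z t₀ = x₀ := hz0'
      have hzball := stays_in_ball (v := v) (z := z) (by linarith : t₀ ≤ s₁) hrpos hCb0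
        hzderiv hz0 hvbound (by rw [show s₁ - t₀ = τ by rw [hs₁def]; ring]; exact hCbτ)
      obtain ⟨δ₀, hδ₀, hδball⟩ := Metric.continuousAt_iff.mp hα.continuousAt (ε * cc)
        (by positivity)
      have hwnn : ∀ s ∈ Icc t₀ s₁, 0 ≤ h (z s) := by
        apply nonneg_of_pos_deriv (w' := fun s => ⟪gradient h (z s), v (z s)⟫)
          (δ := δ₀ / 2) (by positivity) (by linarith)
        · intro s hs
          exact hasDerivWithinAt_comp_grad hh (hzderiv s hs)
        · rw [hz0]; exact hyt₀
        · intro s hs hge hle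
          have hzmem : z s ∈ closedBall x₀ r :=
            closedBall_subset_closedBall (by linarith) (hzball s hs)
          have hprop := hrsub₂ (z s) hzmem
          have habs := abs_lt.mp hprop.2
          have hann : h (z s) ∈ Icc (-b) a := by
            constructor
            · have := min_le_right a b
              linarith [habs.1]
            · have := min_le_left a b
              linarith [habs.2]
          have h1 := huss (z s) hann
          have h2 : ⟪gradient h (z s), v (z s)⟫ =
              ⟪gradient h (z s), F (z s)⟫ + ε * ⟪gradient h (z s), grad₀⟫ := by
            show ⟪gradient h (z s), F (z s) + ε • grad₀⟫ = _
            rw [inner_add_right, real_inner_smul_right]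
          have h3 : cc < ⟪gradient h (z s), grad₀⟫ := hprop.1
          have h4 : |α (h (z s))| < ε * cc := by
            have h5 := hδball (show dist (h (z s)) 0 < δ₀ by
              rw [Real.dist_eq, sub_zero]
              exact abs_lt.mpr ⟨by linarith, by linarith⟩)
            rw [Real.dist_eq, hα0, sub_zero] at h5
            exact h5
          rw [h2]
          have h6 := abs_lt.mp h4
          nlinarith [h1]
      -- Gronwall comparison
      have hxcont : ContinuousOn x (Icc t₀ s₁) := fun s hs =>
        (hxF s ⟨hs.1, hs.2.trans hs₁t⟩).continuousAt.continuousWithinAt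
      have hgron := dist_le_of_approx_trajectories_ODE_of_mem
        (v := fun _ : ℝ => v) (s := fun _ : ℝ => closedBall x₀ r) (K := K)
        (f := x) (g := z) (f' := fun s => F (x s)) (g' := fun s => v (z s))
        (εf := ε * ‖grad₀‖) (εg := 0) (δ := 0) (a := t₀) (b := s₁)
        (fun q _ => hvlip q)
        hxcont
        (fun q hq => ((hxF q ⟨hq.1, hq.2.le.trans hs₁t⟩).hasDerivWithinAt))
        (fun q hq => by
          show dist (F (x q)) (F (x q) + ε • grad₀) ≤ ε * ‖grad₀‖
          rw [dist_eq_norm, sub_add_cancel_left, norm_neg, norm_smul, Real.norm_eq_abs,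
            abs_of_pos hε])
        (fun q hq => closedBall_subset_closedBall (by linarith)
          (hxin q (Ico_subset_Icc_self hq)))
        (fun s hs => (hzderiv s hs).continuousWithinAt)
        (fun q hq => hasDerivWithinAt_Ici_of_Icc hq (hzderiv q (Ico_subset_Icc_self hq)))
        (fun q hq => by simp)
        (fun q hq => closedBall_subset_closedBall (by linarith)
          (hzball q (Ico_subset_Icc_self hq)))
        (by rw [hz0, ← hx₀def, dist_self])
      exact ⟨z s₁, hwnn s₁ (right_mem_Icc.2 (by linarith)),
        hgron s₁ (right_mem_Icc.2 (by linarith))⟩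
    -- conclude via ε → 0
    have hfinal : 0 ≤ h (x s₁) := by
      by_contra hneg2
      push_neg at hneg2
      obtain ⟨ρ', hρ', hcontball⟩ := Metric.continuousAt_iff.mp
        (hh.continuous.continuousAt (x := x s₁)) (-h (x s₁)) (by linarith)
      have hcont : ContinuousAt
          (fun ε : ℝ => gronwallBound 0 K (ε * ‖grad₀‖ + 0) (s₁ - t₀)) 0 := by
        apply Continuous.continuousAt
        exact (gronwallBound_continuous_ε 0 K (s₁ - t₀)).comp ((continuous_mul_right _).add continuous_const)
      obtain ⟨ε₁, hε₁, hεball⟩ := Metric.continuousAt_iff.mp hcont ρ' hρ'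
      set ε := min (ε₁ / 2) 1 with hεdef
      have hεpos : 0 < ε := lt_min (by linarith) one_pos
      have hεle : ε ≤ 1 := min_le_right _ _
      obtain ⟨p, hp0, hpdist⟩ := main ε hεpos hεle
      have hbnd : gronwallBound 0 K (ε * ‖grad₀‖ + 0) (s₁ - t₀) < ρ' := by
        have h5 := hεball (show dist ε 0 < ε₁ by
          rw [Real.dist_eq, sub_zero, abs_of_pos hεpos]
          have := min_le_left (ε₁ / 2) 1
          linarith)
        rw [Real.dist_eq] at h5
        have h0 : gronwallBound 0 K ((0 : ℝ) * ‖grad₀‖ + 0) (s₁ - t₀) = 0 := by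
          rw [zero_mul, zero_add, gronwallBound_ε0, zero_mul]
        rw [h0, sub_zero] at h5
        exact lt_of_le_of_lt (le_abs_self _) h5
      have hdist : dist p (x s₁) < ρ' := by
        rw [dist_comm]
        exact lt_of_le_of_lt hpdist hbnd
      have h7 := hcontball hdist
      rw [Real.dist_eq] at h7
      have h8 := abs_lt.mp h7
      linarith
    have h9 : h (x s₁) < 0 := hylt s₁ ⟨by rw [hs₁def]; linarith, hs₁t⟩
    linarith
end

section
/- Let n, m, N ∈ ℕ and consider x' = f(x) + g(x)u with f : ℝⁿ → ℝⁿ and g : ℝⁿ → ℝ^{n×m} locally Lipschitz. For i = 1,…,N let h_i : ℝⁿ → ℝ be continuously differentiable with ∇h_i(x) ≠ 0 whenever h_i(x) = 0, let a_i, b_i > 0, let A^i = {x : h_i(x) ∈ [-b_i, a_i]}, and let α_i : ℝ → ℝ be continuous with α_i(0) = 0 and strictly increasing on [0, ∞). Assume the sets A^1, …, A^N are pairwise disjoint. Let U ⊆ ℝᵐ be convex with 0 ∈ U, let u_nom : ℝⁿ → ℝᵐ be locally Lipschitz with u_nom(x) ∈ U for all x, and for each i let u_{s_i} : ℝⁿ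 → ℝᵐ be locally Lipschitz with u_{s_i}(x) ∈ U for all x and ⟪∇h_i(x), f(x) + g(x) u_{s_i}(x)⟫ ≥ -α_i(h_i(x)) for every x ∈ A^i. For each i let κ_i : ℝ → ℝ be locally Lipschitz with κ_i(0) = 0, κ_i(a_i) = 1, 0 ≤ κ_i ≤ 1 on [0, a_i], and φ_{a_i}(s) = 1 for s > a_i, κ_i(s) for s ∈ [0, a_i], 0 for s < 0. Define φ̄(x) = φ_{a_i}(h_i(x)) if x ∈ A^i for some i, and φ̄(x) = 1 otherwise; define ū_s(x) = u_{s_i}(x) if x ∈ A^i for some i, and ū_s(x) = 0 otherwise; and define u*(x) = (1 - φ̄(x)) ū_s(x) + φ̄(x) u_nom(x). Then: (i) every differentiable curve x : [0, T) → ℝⁿ with x'(t) = f(x(t)) + g(x(t)) u*(x(t)) for all t and h_i(x(0)) ≥ 0 for all i, satisfies h_i(x(t)) ≥ 0 for all i and all t ∈ [0, T); (ii) u*(x) ∈ U for all x ∈ ℝⁿ. (Theorem 3.) -/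
open scoped RealInnerProductSpace ENNReal

open scoped NNReal Topology
open Set Metric Filter


private lemma loclip_clm_apply₂ {X F G H : Type*} [PseudoMetricSpace X]
    [NormedAddCommGroup F] [NormedSpace ℝ F] [NormedAddCommGroup G] [NormedSpace ℝ G]
    [NormedAddCommGroup H] [NormedSpace ℝ H]
    (B : F →L[ℝ] G →L[ℝ] H) {u : X → F} {v : X → G}
    (hu : LocallyLipschitz u) (hv : LocallyLipschitz v) :
    LocallyLipschitz fun x => B (u x) (v x) := by
  intro x
  obtain ⟨Ku, s, hs, hus⟩ := hu x
  obtain ⟨Kv, t, ht, hvt⟩ := hv x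
  obtain ⟨r, hr0, hball⟩ := Metric.mem_nhds_iff.1 (Filter.inter_mem hs ht)
  set Cu : ℝ := ‖u x‖ + Ku * r with hCu
  set Cv : ℝ := ‖v x‖ + Kv * r with hCv
  set M : ℝ := ‖B‖ * (Ku * Cv) + ‖B‖ * (Cu * Kv) with hM
  refine ⟨M.toNNReal, Metric.ball x r, Metric.ball_mem_nhds x hr0,
    LipschitzOnWith.of_dist_le_mul ?_⟩
  intro y hy z hz
  have hys := hball hy
  have hzs := hball hz
  have hxx : x ∈ Metric.ball x r := Metric.mem_ball_self hr0
  have hxs := hball hxx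
  have hud : ∀ p ∈ Metric.ball x r, ∀ q ∈ Metric.ball x r,
      ‖u p - u q‖ ≤ Ku * dist p q := by
    intro p hp q hq
    rw [← dist_eq_norm]
    exact hus.dist_le_mul p (hball hp).1 q (hball hq).1
  have hvd : ∀ p ∈ Metric.ball x r, ∀ q ∈ Metric.ball x r,
      ‖v p - v q‖ ≤ Kv * dist p q := by
    intro p hp q hq
    rw [← dist_eq_norm]
    exact hvt.dist_le_mul p (hball hp).2 q (hball hq).2
  have hvb : ∀ p ∈ Metric.ball x r, ‖v p‖ ≤ Cv := by
    intro p hp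
    have h1 : ‖v p‖ - ‖v x‖ ≤ ‖v p - v x‖ := norm_sub_norm_le _ _
    have h2 : ‖v p - v x‖ ≤ Kv * dist p x := hvd p hp x hxx
    have h3 : dist p x ≤ r := le_of_lt (Metric.mem_ball.1 hp)
    have h4 : (Kv : ℝ) * dist p x ≤ Kv * r :=
      mul_le_mul_of_nonneg_left h3 Kv.coe_nonneg
    rw [hCv]; linarith
  have hub : ∀ p ∈ Metric.ball x r, ‖u p‖ ≤ Cu := by
    intro p hp
    have h1 : ‖u p‖ - ‖u x‖ ≤ ‖u p - u x‖ := norm_sub_norm_le _ _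
    have h2 : ‖u p - u x‖ ≤ Ku * dist p x := hud p hp x hxx
    have h3 : dist p x ≤ r := le_of_lt (Metric.mem_ball.1 hp)
    have h4 : (Ku : ℝ) * dist p x ≤ Ku * r :=
      mul_le_mul_of_nonneg_left h3 Ku.coe_nonneg
    rw [hCu]; linarith
  have key : B (u y) (v y) - B (u z) (v z)
      = B (u y - u z) (v y) + B (u z) (v y - v z) := by
    simp only [map_sub, ContinuousLinearMap.sub_apply]
    abel
  have hCu0 : 0 ≤ Cu := le_trans (norm_nonneg _) (hub x hxx)
  have hCv0 : 0 ≤ Cv := le_trans (norm_nonneg _) (hvb x hxx)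
  calc dist (B (u y) (v y)) (B (u z) (v z))
      = ‖B (u y - u z) (v y) + B (u z) (v y - v z)‖ := by rw [dist_eq_norm, key]
    _ ≤ ‖B (u y - u z) (v y)‖ + ‖B (u z) (v y - v z)‖ := norm_add_le _ _
    _ ≤ ‖B‖ * ‖u y - u z‖ * ‖v y‖ + ‖B‖ * ‖u z‖ * ‖v y - v z‖ :=
        add_le_add (B.le_opNorm₂ _ _) (B.le_opNorm₂ _ _)
    _ ≤ ‖B‖ * (Ku * dist y z) * Cv + ‖B‖ * Cu * (Kv * dist y z) := by
        gcongr
        · exact hud y hy z hz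
        · exact hvb y hy
        · exact hub z hz
        · exact hvd y hy z hz
    _ = M * dist y z := by rw [hM]; ring
    _ ≤ M.toNNReal * dist y z := by
        apply mul_le_mul_of_nonneg_right _ dist_nonneg
        rw [Real.coe_toNNReal']
        exact le_max_left _ _

set_option maxHeartbeats 1000000 in
private theorem safety_aux {n : ℕ}
    (F : EuclideanSpace ℝ (Fin n) → EuclideanSpace ℝ (Fin n))
    (h : EuclideanSpace ℝ (Fin n) → ℝ)
    (hh : ContDiff ℝ 1 h)
    (hgrad : ∀ p, h p = 0 → gradient h p ≠ 0)
    (hloc : ∀ p, h p = 0 → ∃ K : ℝ≥0, ∃ s ∈ 𝓝 p, LipschitzOnWith K F s)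
    (hsub : ∀ p, h p = 0 → 0 ≤ ⟪gradient h p, F p⟫)
    (x : ℝ → EuclideanSpace ℝ (Fin n)) (t₁ : ℝ) (ht₁ : 0 ≤ t₁)
    (hx : ∀ t ∈ Set.Icc 0 t₁, HasDerivAt x (F (x t)) t)
    (h0 : 0 ≤ h (x 0)) : 0 ≤ h (x t₁) := by
  by_contra hneg
  push_neg at hneg
  -- basic continuity and differentiability facts
  have hdiff : Differentiable ℝ h := hh.differentiable one_ne_zero
  have hhc : Continuous h := hh.continuous
  have hxc : ContinuousOn x (Set.Icc 0 t₁) :=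
    fun t ht => (hx t ht).continuousAt.continuousWithinAt
  set ψ : ℝ → ℝ := fun t => h (x t) with hψdef
  have hψc : ContinuousOn ψ (Set.Icc 0 t₁) := hhc.comp_continuousOn hxc
  have hψd : ∀ t ∈ Set.Icc 0 t₁,
      HasDerivAt ψ ⟪gradient h (x t), F (x t)⟫ t := by
    intro t ht
    have h1 : HasFDerivAt h (InnerProductSpace.toDual ℝ _ (gradient h (x t))) (x t) :=
      ((hdiff (x t)).hasGradientAt).hasFDerivAt
    have := h1.comp_hasDerivAt t (hx t ht)
    simp only [InnerProductSpace.toDual_apply_apply] at this; exact this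
  -- the last crossing time τ
  set S : Set ℝ := {t ∈ Set.Icc 0 t₁ | 0 ≤ ψ t} with hSdef
  have hS0 : (0 : ℝ) ∈ S := ⟨⟨le_refl 0, ht₁⟩, h0⟩
  have hSne : S.Nonempty := ⟨0, hS0⟩
  have hSbdd : BddAbove S := ⟨t₁, fun t ht => ht.1.2⟩
  have hSclosed : IsClosed S := by
    have : S = Set.Icc 0 t₁ ∩ ψ ⁻¹' (Set.Ici 0) := by
      ext t; simp [hSdef, Set.mem_sep_iff, and_comm]
    rw [this]
    exact hψc.preimage_isClosed_of_isClosed isClosed_Icc isClosed_Ici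
  set τ : ℝ := sSup S with hτdef
  have hτS : τ ∈ S := hSclosed.csSup_mem hSne hSbdd
  have hτIcc : τ ∈ Set.Icc 0 t₁ := hτS.1
  have hτlt : τ < t₁ := by
    rcases lt_or_eq_of_le hτIcc.2 with h' | h'
    · exact h'
    · exact absurd (h' ▸ hτS.2) (not_le.2 hneg)
  have hafter : ∀ t, τ < t → t ≤ t₁ → ψ t < 0 := by
    intro t htτ htt₁
    by_contra hc
    push_neg at hc
    exact absurd (le_csSup hSbdd ⟨⟨le_trans hτIcc.1 htτ.le, htt₁⟩, hc⟩) (not_le.2 htτ)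
  have hψτ : ψ τ = 0 := by
    rcases lt_or_eq_of_le hτS.2 with h' | h'
    · exfalso
      have hcw : ContinuousWithinAt ψ (Set.Icc 0 t₁) τ := hψc τ hτIcc
      have hev : ∀ᶠ t in 𝓝[Set.Icc 0 t₁] τ, 0 < ψ t :=
        hcw.eventually_const_lt h'
      rw [eventually_nhdsWithin_iff] at hev
      rcases Metric.eventually_nhds_iff.1 hev with ⟨ε, hε, hball⟩
      set t := min t₁ (τ + ε / 2) with htdef
      have htτ : τ < t := lt_min hτlt (by linarith)
      have htt₁ : t ≤ t₁ := min_le_left _ _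
      have hdist : dist t τ < ε := by
        rw [Real.dist_eq, abs_of_pos (by linarith)]
        have : t ≤ τ + ε / 2 := min_le_right _ _
        linarith
      have := hball hdist ⟨le_trans hτIcc.1 htτ.le, htt₁⟩
      exact absurd this (not_lt.2 (hafter t htτ htt₁).le)
    · exact h'.symm
  -- the crossing point
  set p₀ := x τ with hp₀def
  have hhp₀ : h p₀ = 0 := hψτ
  have hG₀ : gradient h p₀ ≠ 0 := hgrad p₀ hhp₀
  set G₀ := gradient h p₀ with hG₀def
  have hG₀norm : 0 < ‖G₀‖ := norm_pos_iff.2 hG₀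
  set c : ℝ := ‖G₀‖ ^ 2 / 2 with hcdef
  have hc0 : 0 < c := by positivity
  -- continuity of the gradient
  have hgc : Continuous (gradient h) := by
    have h1 : Continuous (fderiv ℝ h) := hh.continuous_fderiv one_ne_zero
    exact (InnerProductSpace.toDual ℝ
      (EuclideanSpace ℝ (Fin n))).symm.continuous.comp h1
  -- choose the radius δ
  obtain ⟨K, sLip, hsLip, hKLip⟩ := hloc p₀ hhp₀
  have hev1 : ∀ᶠ q in 𝓝 p₀, c < ⟪gradient h q, G₀⟫ := by
    have hcont : Continuous fun q => ⟪gradient h q, G₀⟫ :=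
      hgc.inner continuous_const
    have hval : c < ⟪gradient h p₀, G₀⟫ := by
      rw [← hG₀def, real_inner_self_eq_norm_sq]
      rw [hcdef]; nlinarith [hG₀norm]
    exact hcont.continuousAt.eventually_const_lt hval
  have hnhds : {q | c < ⟪gradient h q, G₀⟫} ∩ sLip ∈ 𝓝 p₀ :=
    Filter.inter_mem hev1 hsLip
  obtain ⟨r, hr0, hrball⟩ := Metric.mem_nhds_iff.1 hnhds
  set δ : ℝ := r / 3 with hδdef
  have hδ0 : 0 < δ := by positivity
  have hball2δ : Metric.closedBall p₀ (2 * δ) ⊆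
      {q | c < ⟪gradient h q, G₀⟫} ∩ sLip := by
    intro q hq
    apply hrball
    rw [Metric.mem_ball]
    calc dist q p₀ ≤ 2 * δ := Metric.mem_closedBall.1 hq
      _ < r := by rw [hδdef]; linarith
  have hgradball : ∀ q ∈ Metric.closedBall p₀ (2 * δ), c ≤ ⟪gradient h q, G₀⟫ :=
    fun q hq => ((hball2δ hq).1 : _).le
  have hLip : LipschitzOnWith K F (Metric.closedBall p₀ (2 * δ)) :=
    hKLip.mono fun q hq => (hball2δ hq).2
  -- choose t₂
  have hxcτ : ContinuousAt x τ := (hx τ hτIcc).continuousAt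
  have hψcτ : ContinuousAt ψ τ := hhc.continuousAt.comp hxcτ
  have hev2 : ∀ᶠ z in 𝓝 τ, dist (x z) p₀ < δ ∧ -ψ z < c * δ / ‖G₀‖ := by
    have e1 : ∀ᶠ z in 𝓝 τ, dist (x z) p₀ < δ := by
      have : Filter.Tendsto (fun z => dist (x z) p₀) (𝓝 τ) (𝓝 (dist (x τ) p₀)) :=
        (hxcτ.dist continuousAt_const)
      rw [hp₀def] at this ⊢
      have h0' : dist (x τ) (x τ) < δ := by simpa [dist_self] using hδ0
      exact this.eventually_lt_const h0'
    have e2 : ∀ᶠ z in 𝓝 τ, -ψ z < c * δ / ‖G₀‖ := by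
      have hlim : Filter.Tendsto (fun z => -ψ z) (𝓝 τ) (𝓝 (-ψ τ)) := hψcτ.neg
      have : -ψ τ < c * δ / ‖G₀‖ := by rw [hψτ, neg_zero]; positivity
      exact hlim.eventually_lt_const this
    exact e1.and e2
  obtain ⟨ε, hε0, hεball⟩ := Metric.eventually_nhds_iff.1 hev2
  set t₂ : ℝ := min t₁ (τ + ε / 2) with ht₂def
  have hτt₂ : τ < t₂ := lt_min hτlt (by linarith)
  have ht₂t₁ : t₂ ≤ t₁ := min_le_left _ _
  have ht₂sub : Set.Icc τ t₂ ⊆ Set.Icc 0 t₁ :=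
    fun z hz => ⟨le_trans hτIcc.1 hz.1, le_trans hz.2 ht₂t₁⟩
  have hin : ∀ z ∈ Set.Icc τ t₂, dist (x z) p₀ < δ ∧ -ψ z < c * δ / ‖G₀‖ := by
    intro z hz
    apply hεball
    rw [Real.dist_eq, abs_of_nonneg (by linarith [hz.1])]
    have : z ≤ τ + ε / 2 := le_trans hz.2 (min_le_right _ _)
    linarith [hz.1]
  -- the safe set
  set C : Set (EuclideanSpace ℝ (Fin n)) := {y | 0 ≤ h y} with hCdef
  have hCclosed : IsClosed C := isClosed_le continuous_const hhc
  have hCne : C.Nonempty := ⟨p₀, le_of_eq hhp₀.symm⟩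
  -- key distance estimate
  have hdistC : ∀ z ∈ Set.Icc τ t₂, ψ z < 0 →
      Metric.infDist (x z) C ≤ ‖G₀‖ / c * (-ψ z) := by
    intro z hz hψz
    set y := x z with hydef
    have hyball : dist y p₀ < δ := (hin z hz).1
    have hψbd : -ψ z < c * δ / ‖G₀‖ := (hin z hz).2
    set s₀ : ℝ := -ψ z / c with hs₀def
    have hs₀pos : 0 < s₀ := by
      rw [hs₀def]; exact div_pos (by linarith) hc0
    have hs₀le : s₀ * ‖G₀‖ ≤ δ := by
      rw [lt_div_iff₀ hG₀norm] at hψbd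
      rw [hs₀def, div_mul_eq_mul_div, div_le_iff₀ hc0]
      linarith
    set rr : ℝ → ℝ := fun s => h (y + s • G₀) with hrrdef
    have hrrd : ∀ s : ℝ, HasDerivAt rr ⟪gradient h (y + s • G₀), G₀⟫ s := by
      intro s
      have h1 : HasFDerivAt h (InnerProductSpace.toDual ℝ _
          (gradient h (y + s • G₀))) (y + s • G₀) :=
        ((hdiff _).hasGradientAt).hasFDerivAt
      have h2 : HasDerivAt (fun s' : ℝ => y + s' • G₀) G₀ s := by
        have h3 : HasDerivAt (fun s' : ℝ => y + s' • G₀) ((1 : ℝ) • G₀) s :=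
          ((hasDerivAt_id s).smul_const G₀).const_add y
        rwa [one_smul] at h3
      have := h1.comp_hasDerivAt s h2
      simp only [InnerProductSpace.toDual_apply_apply] at this; exact this
    have hmem2δ : ∀ s ∈ Set.Icc (0 : ℝ) s₀,
        y + s • G₀ ∈ Metric.closedBall p₀ (2 * δ) := by
      intro s hs
      rw [Metric.mem_closedBall]
      calc dist (y + s • G₀) p₀ ≤ dist (y + s • G₀) y + dist y p₀ := dist_triangle _ _ _
        _ ≤ s * ‖G₀‖ + δ := by
            apply add_le_add _ hyball.le
            rw [dist_eq_norm, add_sub_cancel_left, norm_smul,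
              Real.norm_eq_abs, abs_of_nonneg hs.1]
        _ ≤ δ + δ := by
            have : s * ‖G₀‖ ≤ s₀ * ‖G₀‖ :=
              mul_le_mul_of_nonneg_right hs.2 (norm_nonneg _)
            linarith [le_trans this hs₀le]
        _ = 2 * δ := by ring
    have hrrcont : ContinuousOn rr (Set.Icc 0 s₀) :=
      fun s _ => ((hrrd s).continuousAt).continuousWithinAt
    obtain ⟨ξ, hξ, hξslope⟩ := exists_hasDerivAt_eq_slope rr
      (fun s => ⟪gradient h (y + s • G₀), G₀⟫) hs₀pos hrrcont
      (fun s hs => hrrd s)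
    have hξc : c ≤ ⟪gradient h (y + ξ • G₀), G₀⟫ :=
      hgradball _ (hmem2δ ξ ⟨hξ.1.le, hξ.2.le⟩)
    have hrr0 : rr 0 = ψ z := by simp [hrrdef, hydef, hψdef]
    have hrrs₀ : 0 ≤ rr s₀ := by
      set IP : ℝ := ⟪gradient h (y + ξ • G₀), G₀⟫ with hIPdef
      have h1 : IP = (rr s₀ - rr 0) / s₀ := by rw [hξslope, sub_zero]
      have h2 : rr s₀ - rr 0 = s₀ * IP := by
        rw [h1, mul_div_assoc', mul_comm, mul_div_assoc, div_self hs₀pos.ne', mul_one]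
      have h3 : c * s₀ ≤ s₀ * IP := by
        rw [mul_comm c s₀]
        exact mul_le_mul_of_nonneg_left hξc hs₀pos.le
      have h4 : c * s₀ = -ψ z := by
        rw [hs₀def, mul_comm, div_mul_cancel₀ _ hc0.ne']
      rw [hrr0] at h2
      linarith
    have hivt : (0 : ℝ) ∈ rr '' Set.Icc 0 s₀ := by
      apply intermediate_value_Icc hs₀pos.le hrrcont
      rw [hrr0]
      exact ⟨hψz.le, hrrs₀⟩
    obtain ⟨s', hs', hrs'⟩ := hivt
    have hqC : y + s' • G₀ ∈ C := le_of_eq hrs'.symm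
    calc Metric.infDist y C ≤ dist y (y + s' • G₀) := Metric.infDist_le_dist_of_mem hqC
      _ = s' * ‖G₀‖ := by
          rw [dist_eq_norm]
          simp [norm_smul, abs_of_nonneg hs'.1]
      _ ≤ s₀ * ‖G₀‖ := mul_le_mul_of_nonneg_right hs'.2 (norm_nonneg _)
      _ = ‖G₀‖ / c * (-ψ z) := by rw [hs₀def]; ring
  -- squared distance to the safe set
  set D : ℝ → ℝ := fun t => (Metric.infDist (x t) C) ^ 2 with hDdef
  have hDcont : ContinuousOn D (Set.Icc τ t₂) :=
    ((Metric.continuous_infDist_pt C).comp_continuousOn (hxc.mono ht₂sub)).pow 2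
  have hxτC : x τ ∈ C := le_of_eq hψτ.symm
  have hDτ : D τ = 0 := by
    rw [hDdef]
    simp [Metric.infDist_zero_of_mem hxτC]
  have hDnonneg : ∀ t, 0 ≤ D t := fun t => sq_nonneg _
  set K' : ℝ := 2 * K with hK'def
  have hK'0 : 0 ≤ K' := by rw [hK'def]; positivity
  set D' : ℝ → ℝ := fun t => K' * D t with hD'def
  -- the liminf condition for Grönwall
  have hDini : ∀ t ∈ Set.Ico τ t₂, ∀ r', D' t < r' →
      ∃ᶠ u in 𝓝[>] t, (u - t)⁻¹ * (D u - D t) < r' := by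
    intro t ht r' hr'
    rcases eq_or_lt_of_le ht.1 with rfl | hτt
    · -- at the crossing time
      have hr'0 : 0 < r' := by
        have hD'τ : D' τ = 0 := by rw [hD'def]; simp [hDτ]
        rw [hD'τ] at hr'
        exact hr'
      set ip : ℝ := ⟪gradient h (x τ), F (x τ)⟫ with hipdef
      have hψ't : HasDerivAt ψ ip τ := hψd τ hτIcc
      have hslope : Filter.Tendsto (slope ψ τ) (𝓝[>] τ) (𝓝 ip) :=
        (hasDerivAt_iff_tendsto_slope.1 hψ't).mono_left
          (nhdsWithin_mono τ fun z hz => Set.mem_compl_singleton_iff.2 (ne_of_gt hz))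
      set CC : ℝ := (‖G₀‖ / c) ^ 2 with hCCdef
      set g₁ : ℝ → ℝ := fun u => CC * ((u - τ) * (slope ψ τ u) ^ 2) with hg₁def
      have htend : Filter.Tendsto g₁ (𝓝[>] τ) (𝓝 0) := by
        have l1 : Filter.Tendsto (fun u : ℝ => u - τ) (𝓝[>] τ) (𝓝 0) := by
          have l1' : Filter.Tendsto (fun u : ℝ => u - τ) (𝓝 τ) (𝓝 (τ - τ)) :=
            (continuous_id.sub continuous_const).tendsto τ
          rw [sub_self] at l1'
          exact l1'.mono_left nhdsWithin_le_nhds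
        have l2 := (l1.mul (hslope.pow 2)).const_mul CC
        simpa using l2
      have hbound : ∀ᶠ u in 𝓝[>] τ, (u - τ)⁻¹ * (D u - D τ) ≤ g₁ u := by
        filter_upwards [Ioc_mem_nhdsGT hτt₂] with u hu
        have hut : τ < u := hu.1
        have hune : u - τ ≠ 0 := by linarith
        have hψu : ψ u < 0 := hafter u hut (le_trans hu.2 ht₂t₁)
        have hd := hdistC u ⟨hut.le, hu.2⟩ hψu
        have hDu : D u ≤ CC * (ψ u) ^ 2 := by
          rw [hDdef, hCCdef]
          calc (Metric.infDist (x u) C) ^ 2 ≤ (‖G₀‖ / c * (-ψ u)) ^ 2 := by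
                apply pow_le_pow_left₀ Metric.infDist_nonneg hd
            _ = (‖G₀‖ / c) ^ 2 * (ψ u) ^ 2 := by ring
        have hψu_slope : ψ u = (u - τ) * slope ψ τ u := by
          rw [slope_def_field, hψτ, sub_zero, mul_comm,
            div_mul_cancel₀ _ hune]
        rw [hDτ, sub_zero]
        calc (u - τ)⁻¹ * D u ≤ (u - τ)⁻¹ * (CC * (ψ u) ^ 2) := by
              apply mul_le_mul_of_nonneg_left hDu
              rw [inv_nonneg]
              linarith
          _ = g₁ u := by
              rw [hg₁def]
              simp only []
              rw [hψu_slope]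
              field_simp
      have hlt : ∀ᶠ u in 𝓝[>] τ, g₁ u < r' := htend.eventually_lt_const hr'0
      exact ((hbound.and hlt).mono fun u hu => lt_of_le_of_lt hu.1 hu.2).frequently
    · -- after the crossing time
      have hψt : ψ t < 0 := hafter t hτt (le_trans ht.2.le ht₂t₁)
      have hxtC : x t ∉ C := fun hc => absurd (hc : 0 ≤ ψ t) (not_le.2 hψt)
      obtain ⟨p, hpC, hpd⟩ := hCclosed.exists_infDist_eq_dist hCne (x t)
      set w : EuclideanSpace ℝ (Fin n) := x t - p with hwdef
      have hwnorm : ‖w‖ = Metric.infDist (x t) C := by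
        rw [hwdef, ← dist_eq_norm, hpd]
      have hdpos : 0 < Metric.infDist (x t) C := by
        rcases lt_or_eq_of_le (Metric.infDist_nonneg (x := x t) (s := C)) with h' | h'
        · exact h'
        · exact absurd ((hCclosed.mem_iff_infDist_zero hCne).2 h'.symm) hxtC
      have hwpos : 0 < ‖w‖ := by rw [hwnorm]; exact hdpos
      -- the nearest point lies in the good ball
      have hxtball : dist (x t) p₀ < δ := (hin t ⟨ht.1, ht.2.le⟩).1
      have hdleδ : Metric.infDist (x t) C ≤ δ :=
        le_trans (Metric.infDist_le_dist_of_mem hxτC) hxtball.le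
      have hpball : p ∈ Metric.closedBall p₀ (2 * δ) := by
        rw [Metric.mem_closedBall]
        calc dist p p₀ ≤ dist p (x t) + dist (x t) p₀ := dist_triangle _ _ _
          _ ≤ δ + δ := by
              apply add_le_add _ hxtball.le
              rw [dist_comm, ← hpd]
              exact hdleδ
          _ = 2 * δ := by ring
      have hxtball' : x t ∈ Metric.closedBall p₀ (2 * δ) := by
        rw [Metric.mem_closedBall]
        calc dist (x t) p₀ ≤ δ := hxtball.le
          _ ≤ 2 * δ := by linarith
      -- the nearest point is on the boundary
      have hhp : h p = 0 := by
        by_contra hne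
        have hplt : 0 < h p := lt_of_le_of_ne (hpC : 0 ≤ h p) (Ne.symm hne)
        have hopen : IsOpen {y : EuclideanSpace ℝ (Fin n) | 0 < h y} :=
          isOpen_lt continuous_const hhc
        obtain ⟨ρ, hρ0, hρball⟩ := Metric.isOpen_iff.1 hopen p hplt
        set θ : ℝ := min (ρ / (2 * ‖w‖)) 1 with hθdef
        have hθ0 : 0 < θ := lt_min (by positivity) one_pos
        have hθ1 : θ ≤ 1 := min_le_right _ _
        set q := p + θ • w with hqdef
        have hqball : q ∈ Metric.ball p ρ := by
          rw [Metric.mem_ball, hqdef, dist_eq_norm, add_sub_cancel_left, norm_smul,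
            Real.norm_eq_abs, abs_of_pos hθ0]
          have : θ ≤ ρ / (2 * ‖w‖) := min_le_left _ _
          calc θ * ‖w‖ ≤ ρ / (2 * ‖w‖) * ‖w‖ := mul_le_mul_of_nonneg_right this (norm_nonneg _)
            _ = ρ / 2 := by field_simp
            _ < ρ := by linarith
        have hq01 : 0 < h q := hρball hqball
        have hqC : q ∈ C := le_of_lt hq01
        have hxq : x t - q = (1 - θ) • w := by
          rw [hqdef, hwdef]
          rw [sub_smul, one_smul]
          abel
        have hcontra : Metric.infDist (x t) C ≤ (1 - θ) * ‖w‖ := by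
          calc Metric.infDist (x t) C ≤ dist (x t) q := Metric.infDist_le_dist_of_mem hqC
            _ = (1 - θ) * ‖w‖ := by
                rw [dist_eq_norm, hxq, norm_smul, Real.norm_eq_abs,
                  abs_of_nonneg (by linarith)]
        rw [← hwnorm] at hcontra
        nlinarith
      -- the outward direction is normal to the boundary
      have hnormal : ∀ v : EuclideanSpace ℝ (Fin n),
          0 < ⟪gradient h p, v⟫ → ⟪w, v⟫ ≤ 0 := by
        intro v hv
        set rr2 : ℝ → ℝ := fun s => h (p + s • v) with hrr2def
        have hrr2d : HasDerivAt rr2 ⟪gradient h p, v⟫ 0 := by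
          have h1 : HasFDerivAt h (InnerProductSpace.toDual ℝ _ (gradient h p))
              (p + (0 : ℝ) • v) := by
            rw [zero_smul, add_zero]
            exact ((hdiff p).hasGradientAt).hasFDerivAt
          have h2 : HasDerivAt (fun s : ℝ => p + s • v) v 0 := by
            have h2' : HasDerivAt (fun s : ℝ => p + s • v) ((1 : ℝ) • v) 0 :=
              ((hasDerivAt_id 0).smul_const v).const_add p
            rwa [one_smul] at h2'
          have h3 := h1.comp_hasDerivAt 0 h2
          simp only [InnerProductSpace.toDual_apply_apply] at h3; exact h3
        have hrr20 : rr2 0 = 0 := by simp [hrr2def, hhp]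
        have hslope2 : Filter.Tendsto (slope rr2 0) (𝓝[>] 0) (𝓝 ⟪gradient h p, v⟫) :=
          (hasDerivAt_iff_tendsto_slope.1 hrr2d).mono_left
            (nhdsWithin_mono 0 fun z hz => Set.mem_compl_singleton_iff.2 (ne_of_gt hz))
        have hposev : ∀ᶠ s in 𝓝[>] (0 : ℝ), 0 < rr2 s := by
          have h4 : ∀ᶠ s in 𝓝[>] (0 : ℝ), 0 < slope rr2 0 s :=
            hslope2.eventually_const_lt hv
          filter_upwards [h4, self_mem_nhdsWithin] with s hs hs'
          have hs0 : (0 : ℝ) < s := hs'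
          have : slope rr2 0 s = rr2 s / s := by
            rw [slope_def_field, hrr20]; ring_nf
          rw [this] at hs
          have := mul_pos hs hs0
          rwa [div_mul_cancel₀ _ hs0.ne'] at this
        have hineq : ∀ᶠ s in 𝓝[>] (0 : ℝ), ⟪w, v⟫ ≤ s * (‖v‖ ^ 2 / 2) := by
          filter_upwards [hposev, self_mem_nhdsWithin] with s hs hs'
          have hs0 : (0 : ℝ) < s := hs'
          have hqC : p + s • v ∈ C := le_of_lt hs
          have hdq : ‖w‖ ≤ ‖w - s • v‖ := by
            rw [hwnorm]
            calc Metric.infDist (x t) C ≤ dist (x t) (p + s • v) :=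
                  Metric.infDist_le_dist_of_mem hqC
              _ = ‖w - s • v‖ := by rw [dist_eq_norm, hwdef]; congr 1; abel
          have hsq : ‖w‖ ^ 2 ≤ ‖w - s • v‖ ^ 2 :=
            pow_le_pow_left₀ (norm_nonneg _) hdq 2
          have hexp : ‖w - s • v‖ ^ 2 = ‖w‖ ^ 2 - 2 * (s * ⟪w, v⟫) + s ^ 2 * ‖v‖ ^ 2 := by
            have he := norm_sub_sq_real w (s • v)
            rw [real_inner_smul_right, norm_smul, Real.norm_eq_abs, abs_of_pos hs0,
              mul_pow] at he
            exact he
          rw [hexp] at hsq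
          have h6 : 2 * s * ⟪w, v⟫ ≤ s ^ 2 * ‖v‖ ^ 2 := by nlinarith
          rw [← sub_nonneg]
          have h7 : s * (‖v‖ ^ 2 / 2) - ⟪w, v⟫ = (s ^ 2 * ‖v‖ ^ 2 - 2 * s * ⟪w, v⟫) / (2 * s) := by
            field_simp
          rw [h7]
          apply div_nonneg (by linarith) (by linarith)
        have htends : Filter.Tendsto (fun s : ℝ => s * (‖v‖ ^ 2 / 2)) (𝓝[>] (0 : ℝ)) (𝓝 0) := by
          have l1' : Filter.Tendsto (fun s : ℝ => s * (‖v‖ ^ 2 / 2)) (𝓝 0)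
              (𝓝 (0 * (‖v‖ ^ 2 / 2))) := (continuous_id.mul continuous_const).tendsto 0
          rw [zero_mul] at l1'
          exact l1'.mono_left nhdsWithin_le_nhds
        exact ge_of_tendsto htends hineq
      have hnormal' : ∀ v : EuclideanSpace ℝ (Fin n),
          0 ≤ ⟪gradient h p, v⟫ → ⟪w, v⟫ ≤ 0 := by
        intro v hv
        have hGp : gradient h p ≠ 0 := hgrad p hhp
        have hGpn : 0 < ‖gradient h p‖ := norm_pos_iff.2 hGp
        have hev : ∀ᶠ e in 𝓝[>] (0 : ℝ), ⟪w, v⟫ ≤ e * (-⟪w, gradient h p⟫) := by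
          filter_upwards [self_mem_nhdsWithin] with e he
          have he0 : (0 : ℝ) < e := he
          have h1 : 0 < ⟪gradient h p, v + e • gradient h p⟫ := by
            rw [inner_add_right, real_inner_smul_right, real_inner_self_eq_norm_sq]
            nlinarith [mul_pos he0 (pow_pos hGpn 2)]
          have h2 := hnormal _ h1
          rw [inner_add_right, real_inner_smul_right] at h2
          linarith
        have htends : Filter.Tendsto (fun e : ℝ => e * (-⟪w, gradient h p⟫))
            (𝓝[>] (0 : ℝ)) (𝓝 0) := by
          have l1' : Filter.Tendsto (fun e : ℝ => e * (-⟪w, gradient h p⟫)) (𝓝 0)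
              (𝓝 (0 * (-⟪w, gradient h p⟫))) := (continuous_id.mul continuous_const).tendsto 0
          rw [zero_mul] at l1'
          exact l1'.mono_left nhdsWithin_le_nhds
        exact ge_of_tendsto htends hev
      have hwFp : ⟪w, F p⟫ ≤ 0 := hnormal' _ (hsub p hhp)
      -- Lipschitz bound on the derivative of the squared distance
      have hFlip : ‖F (x t) - F p‖ ≤ (K : ℝ) * ‖w‖ := by
        have h1 := hLip.dist_le_mul (x t) hxtball' p hpball
        rw [dist_eq_norm] at h1
        rw [hwdef]
        calc ‖F (x t) - F p‖ ≤ (K : ℝ) * dist (x t) p := h1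
          _ = (K : ℝ) * ‖x t - p‖ := by rw [dist_eq_norm]
      set q₂ : ℝ → ℝ := fun z' => ⟪x z' - p, x z' - p⟫ with hq₂def
      have hxtd : HasDerivAt (fun z' => x z' - p) (F (x t)) t :=
        (hx t (ht₂sub ⟨ht.1, ht.2.le⟩)).sub_const p
      have hq₂d : HasDerivAt q₂ (2 * ⟪w, F (x t)⟫) t := by
        have := hxtd.inner ℝ hxtd
        have heq : ⟪x t - p, F (x t)⟫ + ⟪F (x t), x t - p⟫ = 2 * ⟪w, F (x t)⟫ := by
          rw [← hwdef, real_inner_comm (F (x t)) w]; ring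
        rwa [heq] at this
      have hq₂t : q₂ t = D t := by
        have e1 : q₂ t = ‖x t - p‖ ^ 2 := real_inner_self_eq_norm_sq _
        rw [e1, ← hwdef, hwnorm]
      have hder_le : 2 * ⟪w, F (x t)⟫ < r' := by
        have h1 : ⟪w, F (x t)⟫ = ⟪w, F (x t) - F p⟫ + ⟪w, F p⟫ := by
          rw [← inner_add_right]; congr 1; abel
        have h2 : ⟪w, F (x t) - F p⟫ ≤ ‖w‖ * ‖F (x t) - F p‖ :=
          real_inner_le_norm _ _
        have h3 : ‖w‖ * ‖F (x t) - F p‖ ≤ (K : ℝ) * ‖w‖ ^ 2 := by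
          calc ‖w‖ * ‖F (x t) - F p‖ ≤ ‖w‖ * ((K : ℝ) * ‖w‖) :=
                mul_le_mul_of_nonneg_left hFlip (norm_nonneg _)
            _ = (K : ℝ) * ‖w‖ ^ 2 := by ring
        have h4 : ‖w‖ ^ 2 = D t := by rw [hwnorm]
        have h5 : K' * D t < r' := hr'
        have h5' : 2 * (K : ℝ) * D t < r' := by rwa [hK'def] at h5
        nlinarith [h5']
      have hslope3 : Filter.Tendsto (slope q₂ t) (𝓝[>] t) (𝓝 (2 * ⟪w, F (x t)⟫)) :=
        (hasDerivAt_iff_tendsto_slope.1 hq₂d).mono_left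
          (nhdsWithin_mono t fun z hz => Set.mem_compl_singleton_iff.2 (ne_of_gt hz))
      have hev2' : ∀ᶠ u in 𝓝[>] t, slope q₂ t u < r' :=
        hslope3.eventually_lt_const hder_le
      have hbound2 : ∀ᶠ u in 𝓝[>] t, (u - t)⁻¹ * (D u - D t) ≤ slope q₂ t u := by
        filter_upwards [self_mem_nhdsWithin] with u hu
        have hut : t < u := hu
        have hq₂u : D u ≤ q₂ u := by
          have e2 : q₂ u = ‖x u - p‖ ^ 2 := real_inner_self_eq_norm_sq _
          rw [e2]
          show (Metric.infDist (x u) C) ^ 2 ≤ ‖x u - p‖ ^ 2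
          apply pow_le_pow_left₀ Metric.infDist_nonneg
          rw [← dist_eq_norm]
          exact Metric.infDist_le_dist_of_mem hpC
        rw [slope_def_field, div_eq_inv_mul]
        apply mul_le_mul_of_nonneg_left _ (by rw [inv_nonneg]; linarith)
        rw [hq₂t]
        linarith
      exact ((hbound2.and hev2').mono fun u hu => lt_of_le_of_lt hu.1 hu.2).frequently
  -- Grönwall's inequality concludes
  have hgron := le_gronwallBound_of_liminf_deriv_right_le (f := D) (f' := D')
    (δ := 0) (K := K') (ε := 0) hDcont hDini (le_of_eq hDτ)
    (fun t ht => by rw [hD'def]; simp)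
  have hDt₂ : D t₂ ≤ 0 := by
    have := hgron t₂ ⟨hτt₂.le, le_refl t₂⟩
    rwa [gronwallBound_ε0_δ0] at this
  have hxT₂ : x t₂ ∈ C := by
    apply (hCclosed.mem_iff_infDist_zero hCne).2
    have h1 := hDnonneg t₂
    have h2 : (Metric.infDist (x t₂) C) ^ 2 = 0 := le_antisymm hDt₂ h1
    exact pow_eq_zero_iff (by norm_num) |>.1 h2
  exact absurd (hxT₂ : 0 ≤ ψ t₂) (not_le.2 (hafter t₂ hτt₂ ht₂t₁))

private lemma loclip_smul {X : Type*} [PseudoMetricSpace X] {G : Type*}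
    [NormedAddCommGroup G] [NormedSpace ℝ G] {c : X → ℝ} {v : X → G}
    (hc : LocallyLipschitz c) (hv : LocallyLipschitz v) :
    LocallyLipschitz fun y => c y • v y := by
  have := loclip_clm_apply₂ ((ContinuousLinearMap.lsmul ℝ ℝ : ℝ →L[ℝ] G →L[ℝ] G)) hc hv
  simpa [ContinuousLinearMap.lsmul_apply] using this

private lemma loclip_clm_app {X : Type*} [PseudoMetricSpace X] {G H : Type*}
    [NormedAddCommGroup G] [NormedSpace ℝ G] [NormedAddCommGroup H] [NormedSpace ℝ H]
    {gm : X → (G →L[ℝ] H)} {u : X → G}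
    (hg : LocallyLipschitz gm) (hu : LocallyLipschitz u) :
    LocallyLipschitz fun y => (gm y) (u y) := by
  have := loclip_clm_apply₂ ((ContinuousLinearMap.apply ℝ H : G →L[ℝ] (G →L[ℝ] H) →L[ℝ] H)) hu hg
  simpa [ContinuousLinearMap.apply_apply] using this

/-- **Theorem 3**: the multiple-ZCBF mixed-initiative controller
`u*(x) = (1 - φ̄(x)) ū_s(x) + φ̄(x) u_nom(x)` (with `φ̄(x) = φ_{a_i}(h_i(x))`,
`ū_s(x) = u_{s_i}(x)` on `A^i`, and `φ̄(x) = 1`, `ū_s(x) = 0` elsewhere)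
renders the system safe with respect to each `C^i` and respects the input
constraints, provided the annuli `A^i` are pairwise disjoint. -/
theorem multiple_zcbf_mixed_initiative_controller (n m N : ℕ)
    (f : EuclideanSpace ℝ (Fin n) → EuclideanSpace ℝ (Fin n))
    (g : EuclideanSpace ℝ (Fin n) → (EuclideanSpace ℝ (Fin m) →L[ℝ] EuclideanSpace ℝ (Fin n)))
    (hf : LocallyLipschitz f) (hg : LocallyLipschitz g)
    (h : Fin N → EuclideanSpace ℝ (Fin n) → ℝ)
    (hh : ∀ i, ContDiff ℝ 1 (h i))
    (hgrad : ∀ i x, h i x = 0 → gradient (h i) x ≠ 0)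
    (a b : Fin N → ℝ) (ha : ∀ i, 0 < a i) (hb : ∀ i, 0 < b i)
    (A : Fin N → Set (EuclideanSpace ℝ (Fin n)))
    (hA : ∀ i, A i = {x | h i x ∈ Set.Icc (-(b i)) (a i)})
    (α : Fin N → ℝ → ℝ) (hα : ∀ i, Continuous (α i)) (hα0 : ∀ i, α i 0 = 0)
    (hαmono : ∀ i, StrictMonoOn (α i) (Set.Ici 0))
    -- the annuli are pairwise disjoint
    (hdisj : ∀ i j : Fin N, i ≠ j → A i ∩ A j = ∅)
    (U : Set (EuclideanSpace ℝ (Fin m))) (hU : Convex ℝ U) (hU0 : (0 : EuclideanSpace ℝ (Fin m)) ∈ U)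
    (unom : EuclideanSpace ℝ (Fin n) → EuclideanSpace ℝ (Fin m))
    (hunom : LocallyLipschitz unom) (hunomU : ∀ x, unom x ∈ U)
    (us : Fin N → EuclideanSpace ℝ (Fin n) → EuclideanSpace ℝ (Fin m))
    (hus : ∀ i, LocallyLipschitz (us i)) (husU : ∀ i x, us i x ∈ U)
    (huss : ∀ i, ∀ x ∈ A i, ⟪gradient (h i) x, f x + g x (us i x)⟫ ≥ -α i (h i x))
    (κ : Fin N → ℝ → ℝ) (hκ : ∀ i, LocallyLipschitz (κ i))
    (hκ0 : ∀ i, κ i 0 = 0) (hκa : ∀ i, κ i (a i) = 1)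
    (hκ01 : ∀ i, ∀ s ∈ Set.Icc 0 (a i), κ i s ∈ Set.Icc (0 : ℝ) 1)
    (φ : Fin N → ℝ → ℝ)
    (hφ : ∀ i, φ i = fun s => if a i < s then 1 else if 0 ≤ s then κ i s else 0)
    -- `φ̄(x) = φ_{a_i}(h_i(x))` if `x ∈ A^i` for some `i`, and `φ̄(x) = 1` otherwise
    (φbar : EuclideanSpace ℝ (Fin n) → ℝ)
    (hφbar₁ : ∀ i, ∀ x ∈ A i, φbar x = φ i (h i x))
    (hφbar₂ : ∀ x, (∀ i, x ∉ A i) → φbar x = 1)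
    -- `ū_s(x) = u_{s_i}(x)` if `x ∈ A^i` for some `i`, and `ū_s(x) = 0` otherwise
    (usbar : EuclideanSpace ℝ (Fin n) → EuclideanSpace ℝ (Fin m))
    (husbar₁ : ∀ i, ∀ x ∈ A i, usbar x = us i x)
    (husbar₂ : ∀ x, (∀ i, x ∉ A i) → usbar x = 0)
    (ustar : EuclideanSpace ℝ (Fin n) → EuclideanSpace ℝ (Fin m))
    (hustar : ustar = fun x => (1 - φbar x) • usbar x + φbar x • unom x) :
    -- (i) safety with respect to each `C^i = {x : h_i x ≥ 0}`
    (∀ T : ℝ≥0∞, 0 < T →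
      ∀ x : ℝ → EuclideanSpace ℝ (Fin n),
        (∀ t : ℝ, 0 ≤ t → ENNReal.ofReal t < T →
          HasDerivAt x (f (x t) + g (x t) (ustar (x t))) t) →
        (∀ i, h i (x 0) ≥ 0) →
        ∀ i, ∀ t : ℝ, 0 ≤ t → ENNReal.ofReal t < T → h i (x t) ≥ 0) ∧
    -- (ii) input constraints are respected
    (∀ x, ustar x ∈ U) := by

  -- (ii) the input constraint, proved first
  have hustarU : ∀ y, ustar y ∈ U := by
    intro y
    rw [hustar]
    simp only []
    by_cases hy : ∃ i, y ∈ A i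
    · obtain ⟨i, hyA⟩ := hy
      have hφy : φbar y = φ i (h i y) := hφbar₁ i y hyA
      have husy : usbar y = us i y := husbar₁ i y hyA
      have hφ01 : φbar y ∈ Set.Icc (0 : ℝ) 1 := by
        rw [hφy, hφ i]
        simp only []
        split_ifs with h1 h2
        · exact ⟨zero_le_one, le_refl 1⟩
        · exact hκ01 i _ ⟨h2, not_lt.1 h1⟩
        · exact ⟨le_refl 0, zero_le_one⟩
      rw [husy]
      exact hU (husU i y) (hunomU y) (by linarith [hφ01.2]) hφ01.1 (by ring)
    · push_neg at hy
      have hφy : φbar y = 1 := hφbar₂ y hy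
      rw [hφy, sub_self, zero_smul, one_smul, zero_add]
      exact hunomU y
  refine ⟨?_, hustarU⟩
  intro T hT x hx h0 i t ht hlt
  set F : EuclideanSpace ℝ (Fin n) → EuclideanSpace ℝ (Fin n) :=
    fun y => f y + g y (ustar y) with hFdef
  -- `ustar` agrees with `us i` on the zero set of `h i`
  have hAz : ∀ p, h i p = 0 → p ∈ A i := by
    intro p hp
    rw [hA i]
    refine ⟨?_, ?_⟩ <;> rw [hp]
    · linarith [hb i]
    · linarith [ha i]
  have hφzero : φ i 0 = 0 := by
    rw [hφ i]
    simp only []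
    rw [if_neg (not_lt.2 (ha i).le), if_pos le_rfl, hκ0 i]
  have hustar_z : ∀ p, h i p = 0 → ustar p = us i p := by
    intro p hp
    rw [hustar]
    simp only []
    rw [hφbar₁ i p (hAz p hp), husbar₁ i p (hAz p hp), hp, hφzero]
    simp
  -- the subtangentiality condition on the zero set
  have hsub : ∀ p, h i p = 0 → 0 ≤ ⟪gradient (h i) p, F p⟫ := by
    intro p hp
    have h1 := huss i p (hAz p hp)
    rw [hp, hα0 i, neg_zero] at h1
    rw [hFdef]
    simp only []
    rw [hustar_z p hp]
    exact h1
  -- local Lipschitz continuity of the closed loop near the zero set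
  have hloc : ∀ p, h i p = 0 → ∃ K : ℝ≥0, ∃ s ∈ 𝓝 p, LipschitzOnWith K F s := by
    intro p hp
    set φv : EuclideanSpace ℝ (Fin n) → ℝ :=
      fun y => κ i (max 0 (min (h i y) (a i))) with hφvdef
    have hφv_lip : LocallyLipschitz φv :=
      (hκ i).comp ((((hh i).locallyLipschitz).min_const (a i)).const_max 0)
    set Ft : EuclideanSpace ℝ (Fin n) → EuclideanSpace ℝ (Fin n) :=
      fun y => f y + g y ((1 - φv y) • us i y + φv y • unom y) with hFtdef
    have hFt_lip : LocallyLipschitz Ft := by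
      apply hf.add
      apply loclip_clm_app hg
      exact (loclip_smul ((LocallyLipschitz.const (1 : ℝ)).sub hφv_lip) (hus i)).add
        (loclip_smul hφv_lip hunom)
    obtain ⟨K, s, hs, hK⟩ := hFt_lip p
    set V : Set (EuclideanSpace ℝ (Fin n)) :=
      {y | h i y ∈ Set.Ioo (-(b i)) (a i)} with hVdef
    have hVopen : IsOpen V := isOpen_Ioo.preimage (hh i).continuous
    have hpV : p ∈ V := by
      rw [hVdef]
      show h i p ∈ Set.Ioo (-(b i)) (a i)
      rw [hp]
      exact ⟨by linarith [hb i], ha i⟩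
    have hFeq : ∀ y ∈ V, F y = Ft y := by
      intro y hy
      have hy' : h i y ∈ Set.Ioo (-(b i)) (a i) := hy
      have hyA : y ∈ A i := by
        rw [hA i]
        exact ⟨hy'.1.le, hy'.2.le⟩
      have e1 : φbar y = φv y := by
        rw [hφbar₁ i y hyA, hφ i, hφvdef]
        simp only []
        rw [min_eq_left hy'.2.le]
        rcases le_or_gt 0 (h i y) with hge | hltneg
        · rw [if_neg (not_lt.2 hy'.2.le), if_pos hge, max_eq_right hge]
        · rw [if_neg (not_lt.2 hy'.2.le), if_neg (not_le.2 hltneg),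
            max_eq_left hltneg.le, hκ0 i]
      have e2 : usbar y = us i y := husbar₁ i y hyA
      rw [hFdef, hFtdef]
      simp only []
      rw [hustar]
      simp only []
      rw [e1, e2]
    refine ⟨K, s ∩ V, Filter.inter_mem hs (hVopen.mem_nhds hpV), ?_⟩
    intro y hy z hz
    have ey : F y = Ft y := hFeq y hy.2
    have ez : F z = Ft z := hFeq z hz.2
    rw [ey, ez]
    exact hK hy.1 hz.1
  have hres : 0 ≤ h i (x t) := by
    apply safety_aux F (h i) (hh i) (hgrad i) hloc hsub x t ht _ (h0 i)
    intro s hs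
    have h1 : ENNReal.ofReal s < T :=
      lt_of_le_of_lt (ENNReal.ofReal_le_ofReal hs.2) hlt
    have h2 := hx s hs.1 h1
    rw [hFdef]
    exact h2
  exact hres
end

section
/- Let P be a symmetric positive-definite real 2×2 matrix, z_r ∈ ℝ², γ ∈ {-1, 1}, Δ ∈ ℝ, and k_p > 0. Define c : ℝ² → ℝ by c(z) = γ(Δ² - ½⟪z - z_r, P(z - z_r)⟫), and for (z, θ) ∈ ℝ² × ℝ let v(θ) = (cos θ, sin θ) and define the speed control u_{s_p}(z, θ) = -k_p γ c(z) ⟪P(z - z_r), v(θ)⟫ if c(z) ≥ 0 and u_{s_p}(z, θ) = k_p γ c(z) ⟪P(z - z_r), v(θ)⟫ if c(z) < 0. Then for every differentiable curve t ↦ (z(t), θ(t)) with z'(t) = u_{s_p}(z(t), θ(t))·v(θ(t)), the function t ↦ c(z(t)) is differentiable with derivative d/dt c(z(t)) = k_p · |c(z(t))| · ⟪P(z(t) - z_r), v(θ(t))⟫² ≥ 0 for all t. (The Lie-derivative computation in the proof of Proposition 1(i) showing that h = c is a Type-II ZCBF for the unicycle under the safety speed control.) -/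
open scoped RealInnerProductSpace

/-- The heading direction `v(θ) = (cos θ, sin θ)` in `ℝ²`. -/
noncomputable def headingDir (θ : ℝ) : EuclideanSpace ℝ (Fin 2) :=
  WithLp.toLp 2 ![Real.cos θ, Real.sin θ]

/-- The Lie-derivative computation in the proof of **Proposition 1(i)**: under
the safety speed control `u_{s_p}`, the ellipsoidal constraint function
satisfies `d/dt c(z(t)) = k_p |c(z(t))| ⟪P(z(t)-z_r), v(θ(t))⟫² ≥ 0`. -/
theorem unicycle_zcbf_lie_derivative
    (P : EuclideanSpace ℝ (Fin 2) →L[ℝ] EuclideanSpace ℝ (Fin 2))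
    (hPsymm : ∀ x y : EuclideanSpace ℝ (Fin 2), ⟪P x, y⟫ = ⟪x, P y⟫)
    (hPpos : ∀ x : EuclideanSpace ℝ (Fin 2), x ≠ 0 → 0 < ⟪x, P x⟫)
    (zr : EuclideanSpace ℝ (Fin 2)) (γ Δ kp : ℝ)
    (hγ : γ = 1 ∨ γ = -1) (hkp : 0 < kp)
    (c : EuclideanSpace ℝ (Fin 2) → ℝ)
    (hc : c = fun z => γ * (Δ ^ 2 - (1 / 2) * ⟪z - zr, P (z - zr)⟫))
    (usp : EuclideanSpace ℝ (Fin 2) → ℝ → ℝ)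
    (husp : usp = fun z θ =>
      if 0 ≤ c z then -(kp * γ * c z * ⟪P (z - zr), headingDir θ⟫)
      else kp * γ * c z * ⟪P (z - zr), headingDir θ⟫) :
    ∀ (z : ℝ → EuclideanSpace ℝ (Fin 2)) (θ : ℝ → ℝ),
      (∀ t, DifferentiableAt ℝ θ t) →
      (∀ t, HasDerivAt z (usp (z t) (θ t) • headingDir (θ t)) t) →
      ∀ t : ℝ,
        HasDerivAt (fun s => c (z s))
          (kp * |c (z t)| * ⟪P (z t - zr), headingDir (θ t)⟫ ^ 2) t ∧
        0 ≤ kp * |c (z t)| * ⟪P (z t - zr), headingDir (θ t)⟫ ^ 2 := by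
  intro z θ hθ hz t
  have hγ2 : γ * γ = 1 := by rcases hγ with h | h <;> simp [h]
  set u := usp (z t) (θ t) with hu
  set v := headingDir (θ t) with hv
  set w : EuclideanSpace ℝ (Fin 2) := u • v with hw
  have hzt : HasDerivAt z w t := hz t
  have hz' : HasDerivAt (fun s => z s - zr) w t := hzt.sub_const zr
  have hPz : HasDerivAt (fun s => P (z s - zr)) (P w) t :=
    (P.hasFDerivAt.comp_hasDerivAt t hz')
  have hinner : HasDerivAt (fun s => ⟪z s - zr, P (z s - zr)⟫)
      (⟪z t - zr, P w⟫ + ⟪w, P (z t - zr)⟫) t := hz'.inner ℝ hPz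
  have hsym : ⟪z t - zr, P w⟫ = ⟪w, P (z t - zr)⟫ := by
    rw [← hPsymm, real_inner_comm]
  rw [hsym] at hinner
  have hcder : HasDerivAt (fun s => c (z s))
      (-γ * ⟪w, P (z t - zr)⟫) t := by
    subst hc
    have := ((hinner.const_mul ((1:ℝ)/2)).const_sub (Δ ^ 2)).const_mul γ
    refine this.congr_deriv ?_
    ring
  have hwi : ⟪w, P (z t - zr)⟫ = u * ⟪v, P (z t - zr)⟫ := by
    rw [hw, real_inner_smul_left]
  have hic : ⟪v, P (z t - zr)⟫ = ⟪P (z t - zr), v⟫ := real_inner_comm _ _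
  have hkey : -γ * ⟪w, P (z t - zr)⟫
      = kp * |c (z t)| * ⟪P (z t - zr), v⟫ ^ 2 := by
    rw [hwi, hic, hu, husp]
    simp only [← hv]
    by_cases h : 0 ≤ c (z t)
    · rw [abs_of_nonneg h]; simp only [h, if_pos]
      rcases hγ with rfl | rfl <;> ring
    · rw [abs_of_neg (lt_of_not_ge h)]; simp only [h, if_neg, not_false_iff]
      rcases hγ with rfl | rfl <;> ring
  refine ⟨hkey ▸ hcder, ?_⟩
  positivity
end

section
/- Let N ∈ ℕ, and for i = 1,…,N let P_i be symmetric positive-definite real 2×2 matrices, z_{r_i} ∈ ℝ², γ_i ∈ {-1, 1}, Δ_i > 0, a_i, b_i > 0, and k_{p_i}, k_{d_i} > 0. Define c_i(z) = γ_i(Δ_i² - ½⟪z - z_{r_i}, P_i(z - z_{r_i})⟫) and the annuli A^i = {(z, θ) ∈ ℝ² × ℝ : c_i(z) ∈ [-b_i, a_i]}; assume the A^i are pairwise disjoint. For each i define u_{s_i}(z, θ) = (u_{s_{p_i}}, u_{s_{d_i}}) with u_{s_{p_i}} = ∓k_{p_i} γ_i c_i(z) ⟪P_i(z - z_{r_i}),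 (cos θ, sin θ)⟫ (sign - if c_i(z) ≥ 0, + if c_i(z) < 0) and u_{s_{d_i}} = -k_{d_i} ⟪P_i(z - z_{r_i}), (-sin θ, cos θ)⟫. Let u_nom : ℝ² × ℝ → ℝ² be locally Lipschitz, let κ_i : ℝ → ℝ be locally Lipschitz with κ_i(0) = 0, κ_i(a_i) = 1, 0 ≤ κ_i ≤ 1 on [0, a_i], and φ_{a_i}(s) = 1 for s > a_i, κ_i(s) for s ∈ [0, a_i], 0 for s < 0. Define φ̄(z, θ) = φ_{a_i}(c_i(z)) if (z, θ) ∈ A^i for some i, and 1 otherwise; ū_s(z, θ) = u_{s_i}(z, θ) if (z, θ) ∈ A^i for some i, and 0 otherwise; and u* = (u_p*, u_d*) = (1 - φ̄)·ū_s + φ̄·u_nom. Then every differentiable curve t ↦ (z(t), θ(t)) on [0, T) satisfying the closed-loop unicycle dynamics z'(t) = u_p*(z(t), θ(t))·(cos θ(t), sin θ(t)) and θ'(t) = u_d*(z(t), θ(t)), with c_i(z(0)) ≥ 0 for all i, satisfies c_i(z(t)) ≥ 0 for all i and all t ∈ [0, T). (Proposition 1(i): safety of the unicycle with respect to each ellipsoidal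 constraint set under the proposed multi-ZCBF controller.) -/
open scoped RealInnerProductSpace ENNReal

/-- The normal `(-sin θ, cos θ)` to the heading direction in `ℝ²`. -/
noncomputable def headingNormal (θ : ℝ) : EuclideanSpace ℝ (Fin 2) :=
  WithLp.toLp 2 ![-Real.sin θ, Real.cos θ]

lemma norm_headingDir (θ : ℝ) : ‖headingDir θ‖ = 1 := by
  rw [headingDir, EuclideanSpace.norm_eq]
  simp [Fin.sum_univ_two, Real.cos_sq_add_sin_sq]

/-- Exponential comparison: if `g t₀ = 0` and `g' ≥ -K g` on `[t₀, t₂]`, then `g t₂ ≥ 0`. -/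
lemma expGronwall_aux {g g' : ℝ → ℝ} {K t0 t2 : ℝ} (h02 : t0 ≤ t2)
    (hder : ∀ s ∈ Set.Icc t0 t2, HasDerivAt g (g' s) s)
    (hineq : ∀ s ∈ Set.Icc t0 t2, -(K * g s) ≤ g' s)
    (hg0 : g t0 = 0) : 0 ≤ g t2 := by
  have hderh : ∀ s ∈ Set.Icc t0 t2,
      HasDerivAt (fun s => g s * Real.exp (K * s))
        ((g' s + K * g s) * Real.exp (K * s)) s := by
    intro s hs
    have he : HasDerivAt (fun s : ℝ => Real.exp (K * s)) (Real.exp (K * s) * K) s :=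
      (Real.hasDerivAt_exp (K * s)).comp s (by simpa using (hasDerivAt_id s).const_mul K)
    have := (hder s hs).mul he
    refine this.congr_deriv ?_
    ring
  have hmono : MonotoneOn (fun s => g s * Real.exp (K * s)) (Set.Icc t0 t2) := by
    apply monotoneOn_of_deriv_nonneg (convex_Icc _ _)
    · exact fun s hs => (hderh s hs).continuousAt.continuousWithinAt
    · exact fun s hs => (hderh s (interior_subset hs)).differentiableAt.differentiableWithinAt
    · intro s hs
      rw [(hderh s (interior_subset hs)).deriv]
      have h1 := hineq s (interior_subset hs)
      have h2 := Real.exp_pos (K * s)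
      nlinarith
  have := hmono (Set.left_mem_Icc.2 h02) (Set.right_mem_Icc.2 h02) h02
  simp only [hg0, zero_mul] at this
  nlinarith [Real.exp_pos (K * t2), this]

set_option maxHeartbeats 1000000 in
/-- **Proposition 1(i)**: safety of the unicycle with respect to each
ellipsoidal constraint set `C^i = {(z, θ) : c_i(z) ≥ 0}` under the proposed
multi-ZCBF mixed-initiative controller, provided the annuli `A^i` are pairwise
disjoint. -/
theorem unicycle_multiple_zcbf_safety (N : ℕ)
    (P : Fin N → (EuclideanSpace ℝ (Fin 2) →L[ℝ] EuclideanSpace ℝ (Fin 2)))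
    (hPsymm : ∀ i, ∀ x y : EuclideanSpace ℝ (Fin 2), ⟪P i x, y⟫ = ⟪x, P i y⟫)
    (hPpos : ∀ i, ∀ x : EuclideanSpace ℝ (Fin 2), x ≠ 0 → 0 < ⟪x, P i x⟫)
    (zr : Fin N → EuclideanSpace ℝ (Fin 2)) (γ Δ a b kp kd : Fin N → ℝ)
    (hγ : ∀ i, γ i = 1 ∨ γ i = -1) (hΔ : ∀ i, 0 < Δ i)
    (ha : ∀ i, 0 < a i) (hb : ∀ i, 0 < b i)
    (hkp : ∀ i, 0 < kp i) (hkd : ∀ i, 0 < kd i)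
    (c : Fin N → EuclideanSpace ℝ (Fin 2) → ℝ)
    (hc : ∀ i, c i = fun z => γ i * ((Δ i) ^ 2 - (1 / 2) * ⟪z - zr i, P i (z - zr i)⟫))
    (A : Fin N → Set (EuclideanSpace ℝ (Fin 2) × ℝ))
    (hA : ∀ i, A i = {p | c i p.1 ∈ Set.Icc (-(b i)) (a i)})
    -- the annuli are pairwise disjoint
    (hdisj : ∀ i j : Fin N, i ≠ j → A i ∩ A j = ∅)
    -- the safety controls `u_{s_i} = (u_{s_{p_i}}, u_{s_{d_i}})`
    (us : Fin N → EuclideanSpace ℝ (Fin 2) × ℝ → ℝ × ℝ)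
    (hus : ∀ i, us i = fun p =>
      (if 0 ≤ c i p.1 then -(kp i * γ i * c i p.1 * ⟪P i (p.1 - zr i), headingDir p.2⟫)
        else kp i * γ i * c i p.1 * ⟪P i (p.1 - zr i), headingDir p.2⟫,
       -(kd i * ⟪P i (p.1 - zr i), headingNormal p.2⟫)))
    (unom : EuclideanSpace ℝ (Fin 2) × ℝ → ℝ × ℝ)
    (hunom : LocallyLipschitz unom)
    (κ : Fin N → ℝ → ℝ) (hκ : ∀ i, LocallyLipschitz (κ i))
    (hκ0 : ∀ i, κ i 0 = 0) (hκa : ∀ i, κ i (a i) = 1)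
    (hκ01 : ∀ i, ∀ s ∈ Set.Icc 0 (a i), κ i s ∈ Set.Icc (0 : ℝ) 1)
    (φ : Fin N → ℝ → ℝ)
    (hφ : ∀ i, φ i = fun s => if a i < s then 1 else if 0 ≤ s then κ i s else 0)
    -- `φ̄(z, θ) = φ_{a_i}(c_i(z))` if `(z, θ) ∈ A^i` for some `i`, else `1`
    (φbar : EuclideanSpace ℝ (Fin 2) × ℝ → ℝ)
    (hφbar₁ : ∀ i, ∀ p ∈ A i, φbar p = φ i (c i p.1))
    (hφbar₂ : ∀ p, (∀ i, p ∉ A i) → φbar p = 1)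
    -- `ū_s(z, θ) = u_{s_i}(z, θ)` if `(z, θ) ∈ A^i` for some `i`, else `0`
    (usbar : EuclideanSpace ℝ (Fin 2) × ℝ → ℝ × ℝ)
    (husbar₁ : ∀ i, ∀ p ∈ A i, usbar p = us i p)
    (husbar₂ : ∀ p, (∀ i, p ∉ A i) → usbar p = 0)
    (ustar : EuclideanSpace ℝ (Fin 2) × ℝ → ℝ × ℝ)
    (hustar : ustar = fun p => (1 - φbar p) • usbar p + φbar p • unom p) :
    ∀ T : ℝ≥0∞, 0 < T →
      ∀ (z : ℝ → EuclideanSpace ℝ (Fin 2)) (θ : ℝ → ℝ),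
        -- closed-loop unicycle dynamics
        (∀ t : ℝ, 0 ≤ t → ENNReal.ofReal t < T →
          HasDerivAt z ((ustar (z t, θ t)).1 • headingDir (θ t)) t) →
        (∀ t : ℝ, 0 ≤ t → ENNReal.ofReal t < T →
          HasDerivAt θ ((ustar (z t, θ t)).2) t) →
        (∀ i, c i (z 0) ≥ 0) →
        ∀ i, ∀ t : ℝ, 0 ≤ t → ENNReal.ofReal t < T → c i (z t) ≥ 0 := by
  intro T hT z θ hz hθ h0 i t ht0 htT
  by_contra hneg
  push_neg at hneg
  have h00 : 0 ≤ c i (z 0) := h0 i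
  have htpos : 0 < t := by
    rcases ht0.lt_or_eq with h | h
    · exact h
    · exfalso; rw [← h] at hneg; linarith
  have hγ2 : γ i * γ i = 1 := by rcases hγ i with h | h <;> rw [h] <;> norm_num
  -- derivatives on [0, t]
  have hz' : ∀ s ∈ Set.Icc (0:ℝ) t,
      HasDerivAt z ((ustar (z s, θ s)).1 • headingDir (θ s)) s := fun s hs =>
    hz s hs.1 (lt_of_le_of_lt (ENNReal.ofReal_le_ofReal hs.2) htT)
  -- derivative of g(s) = c i (z s)
  have hgder : ∀ s ∈ Set.Icc (0:ℝ) t,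
      HasDerivAt (fun s => c i (z s))
        (-(γ i * (ustar (z s, θ s)).1 * ⟪P i (z s - zr i), headingDir (θ s)⟫)) s := by
    intro s hs
    have hv : HasDerivAt (fun s => z s - zr i) ((ustar (z s, θ s)).1 • headingDir (θ s)) s :=
      (hz' s hs).sub_const _
    have hPv : HasDerivAt (fun s => P i (z s - zr i))
        (P i ((ustar (z s, θ s)).1 • headingDir (θ s))) s :=
      (P i).hasFDerivAt.comp_hasDerivAt s hv
    have hinner := hv.inner ℝ hPv
    have hfinal := ((hinner.const_mul ((1:ℝ)/2)).const_sub ((Δ i)^2)).const_mul (γ i)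
    simp only [hc]
    refine hfinal.congr_deriv ?_
    have e1 : ⟪z s - zr i, P i ((ustar (z s, θ s)).1 • headingDir (θ s))⟫
        = (ustar (z s, θ s)).1 * ⟪P i (z s - zr i), headingDir (θ s)⟫ := by
      rw [← hPsymm i, real_inner_smul_right]
    have e2 : ⟪(ustar (z s, θ s)).1 • headingDir (θ s), P i (z s - zr i)⟫
        = (ustar (z s, θ s)).1 * ⟪P i (z s - zr i), headingDir (θ s)⟫ := by
      rw [real_inner_comm, real_inner_smul_right]
    rw [e1, e2]; ring
  have hgc : ContinuousOn (fun s => c i (z s)) (Set.Icc 0 t) :=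
    fun s hs => (hgder s hs).continuousAt.continuousWithinAt
  -- key: on the lower part of the annulus the derivative of the constraint is nonnegative
  have key : ∀ s ∈ Set.Icc (0:ℝ) t, -(b i) ≤ c i (z s) → c i (z s) ≤ 0 →
      0 ≤ -(γ i * (ustar (z s, θ s)).1 * ⟪P i (z s - zr i), headingDir (θ s)⟫) := by
    intro s hs hbl hle
    have hau : c i (z s) ≤ a i := le_trans hle (ha i).le
    have hp : (z s, θ s) ∈ A i := by rw [hA]; exact ⟨hbl, hau⟩
    have hφb := hφbar₁ i _ hp
    have hub := husbar₁ i _ hp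
    set w := ⟪P i (z s - zr i), headingDir (θ s)⟫ with hwdef
    set cs := c i (z s) with hcsdef
    set un := (unom (z s, θ s)).1 with hundef
    have hust1 : (ustar (z s, θ s)).1
        = (1 - φ i cs) * (us i (z s, θ s)).1 + φ i cs * un := by
      rw [hustar]
      simp only [Prod.fst_add, Prod.smul_fst, smul_eq_mul, hub]
      rw [hφb]
    have hus1 : (us i (z s, θ s)).1
        = if 0 ≤ cs then -(kp i * γ i * cs * w) else kp i * γ i * cs * w := by
      rw [hus i]
    by_cases hcs : 0 ≤ cs
    · have hcs0 : cs = 0 := le_antisymm hle hcs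
      have hφval : φ i (0:ℝ) = 0 := by
        rw [hφ i]
        simp [not_lt.2 (ha i).le, hκ0 i]
      rw [hust1, hus1, if_pos hcs, hcs0, hφval]
      norm_num
    · push_neg at hcs
      have hφval : φ i cs = 0 := by
        rw [hφ i]; simp [show ¬ a i < cs by linarith [ha i], not_le.2 hcs]
      rw [hust1, hus1, if_neg (not_le.2 hcs), hφval]
      have expand : -(γ i * ((1 - 0) * (kp i * γ i * cs * w) + 0 * un) * w)
          = -(kp i * cs * w^2) := by
        linear_combination (-(kp i * cs * w^2)) * hγ2
      rw [expand]
      nlinarith [mul_nonneg (mul_nonneg (hkp i).le (neg_nonneg.2 hcs.le)) (sq_nonneg w)]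
  -- stopping-time argument
  obtain ⟨σ, hσmem, hgσ, hafter⟩ :
      ∃ σ, σ ∈ Set.Icc (0:ℝ) t ∧ 0 ≤ c i (z σ) ∧ ∀ s, σ < s → s ≤ t → c i (z s) < 0 := by
    have hEclosed : IsClosed (Set.Icc (0:ℝ) t ∩ (fun s => c i (z s)) ⁻¹' Set.Ici 0) :=
      hgc.preimage_isClosed_of_isClosed isClosed_Icc isClosed_Ici
    have hEne : (Set.Icc (0:ℝ) t ∩ (fun s => c i (z s)) ⁻¹' Set.Ici 0).Nonempty :=
      ⟨0, ⟨le_refl 0, htpos.le⟩, h00⟩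
    have hEbdd : BddAbove (Set.Icc (0:ℝ) t ∩ (fun s => c i (z s)) ⁻¹' Set.Ici 0) :=
      ⟨t, fun x hx => hx.1.2⟩
    have hts := hEclosed.csSup_mem hEne hEbdd
    refine ⟨sSup (Set.Icc (0:ℝ) t ∩ (fun s => c i (z s)) ⁻¹' Set.Ici 0), hts.1, hts.2, ?_⟩
    intro s h1 h2
    by_contra hcon
    push_neg at hcon
    exact absurd (le_csSup hEbdd ⟨⟨le_trans hts.1.1 h1.le, h2⟩, hcon⟩) (not_le.2 h1)
  have hσ0 : 0 ≤ σ := hσmem.1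
  have hσt : σ ≤ t := hσmem.2
  have hσlt : σ < t := lt_of_le_of_ne hσt (by rintro rfl; linarith)
  have hgle : c i (z σ) ≤ 0 := by
    have hsub : Set.Ioc σ t ⊆ Set.Icc 0 t := fun x hx => ⟨le_trans hσ0 hx.1.le, hx.2⟩
    have htend : Filter.Tendsto (fun s => c i (z s)) (nhdsWithin σ (Set.Ioc σ t))
        (nhds (c i (z σ))) := (hgc σ hσmem).tendsto.mono_left (nhdsWithin_mono σ hsub)
    have hNB : (nhdsWithin σ (Set.Ioc σ t)).NeBot := by
      rw [← mem_closure_iff_nhdsWithin_neBot, closure_Ioc hσlt.ne]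
      exact Set.left_mem_Icc.2 hσt
    exact le_of_tendsto htend (Filter.eventually_of_mem self_mem_nhdsWithin
      fun s hs => (hafter s hs.1 hs.2).le)
  have hgσ0 : c i (z σ) = 0 := le_antisymm hgle hgσ
  obtain ⟨δ2, hδ2, hδ2'⟩ := Metric.continuousWithinAt_iff.mp (hgc σ hσmem) (b i) (hb i)
  set t2 : ℝ := min (σ + δ2/2) t with ht2def
  have ht2a : σ < t2 := lt_min (by linarith) hσlt
  have ht2b : t2 ≤ t := min_le_right _ _
  have ht2mem : ∀ s ∈ Set.Icc σ t2, s ∈ Set.Icc (0:ℝ) t := fun s hs =>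
    ⟨le_trans hσ0 hs.1, le_trans hs.2 ht2b⟩
  have hnear : ∀ s ∈ Set.Icc σ t2, -(b i) ≤ c i (z s) ∧ c i (z s) ≤ 0 := by
    intro s hs
    have hle : s ≤ σ + δ2/2 := le_trans hs.2 (min_le_left _ _)
    have hd : dist s σ < δ2 := by
      rw [Real.dist_eq, abs_of_nonneg (by linarith [hs.1])]; linarith
    have hgb := hδ2' (ht2mem s hs) hd
    rw [Real.dist_eq, hgσ0, sub_zero] at hgb
    refine ⟨(abs_lt.mp hgb).1.le, ?_⟩
    rcases eq_or_lt_of_le hs.1 with h | h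
    · rw [← h, hgσ0]
    · exact (hafter s h (le_trans hs.2 ht2b)).le
  have hfin : 0 ≤ c i (z t2) :=
    expGronwall_aux (K := 0) (g := fun s => c i (z s))
      (g' := fun s => -(γ i * (ustar (z s, θ s)).1 * ⟪P i (z s - zr i), headingDir (θ s)⟫))
      ht2a.le
      (fun s hs => hgder s (ht2mem s hs))
      (fun s hs => by
        simpa using key s (ht2mem s hs) (hnear s hs).1 (hnear s hs).2)
      hgσ0
  exact absurd hfin (not_le.2 (hafter t2 ht2a ht2b))
end
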